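/- arXiv:2108.12733 — 4 statements merged into one kernel-verified Lean document; each statement's English description precedes it below -/
import Mathlib

section
/- Let p be a prime with p ≥ 5. Then the generalized harmonic number H_{2,(p−1)/2} = Σ_{k=1}^{(p−1)/2} 1/k² satisfies H_{2,(p−1)/2} ≡ 0 (mod p). -/
/-- `x ≡ y (mod p^r)` for rationals: `x - y = p^r * t` with the denominator of `t`
prime to `p`, i.e. the `p`-adic valuation of `x - y` is at least `r`. -/
def ratCongr (p r : ℕ) (x y : ℚ) : Prop :=
  ∃ t : ℚ, x - y = (p : ℚ) ^ r * t ∧ ¬ (p ∣ t.den)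

lemma ratval_add (p : ℕ) [Fact p.Prime] (a b : ℚ) (ha : ¬ p ∣ a.den) (hb : ¬ p ∣ b.den) :
    ¬ p ∣ (a + b).den ∧
    ((a + b).num : ZMod p) / ((a + b).den : ZMod p)
      = (a.num : ZMod p) / (a.den : ZMod p) + (b.num : ZMod p) / (b.den : ZMod p) := by
  have hp : p.Prime := Fact.out
  have hdab : ¬ p ∣ (a + b).den := by
    intro h
    rcases hp.dvd_mul.mp (h.trans (Rat.add_den_dvd a b)) with h | h
    · exact ha h
    · exact hb h
  refine ⟨hdab, ?_⟩
  have hDa : (a.den : ℤ) ≠ 0 := by exact_mod_cast a.den_ne_zero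
  have hDb : (b.den : ℤ) ≠ 0 := by exact_mod_cast b.den_ne_zero
  have hD : ((a.den : ℤ) * (b.den : ℤ)) ≠ 0 := mul_ne_zero hDa hDb
  have hDab : (((a + b).den : ℤ)) ≠ 0 := by exact_mod_cast (a + b).den_ne_zero
  have key : (a + b).num * ((a.den : ℤ) * (b.den : ℤ))
      = (a.num * b.den + a.den * b.num) * ((a + b).den : ℤ) := by
    have h1 : Rat.divInt ((a + b).num) (((a + b).den : ℤ))
        = Rat.divInt ((a.num * b.den + a.den * b.num : ℤ)) ((a.den : ℤ) * (b.den : ℤ)) := by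
      rw [Rat.num_divInt_den]
      exact Rat.add_num_den a b
    exact (Rat.divInt_eq_divInt_iff hDab hD).mp h1
  have cab : (((a + b).den : ZMod p)) ≠ 0 := by
    rw [Ne, ZMod.natCast_eq_zero_iff]; exact hdab
  have ca : ((a.den : ZMod p)) ≠ 0 := by
    rw [Ne, ZMod.natCast_eq_zero_iff]; exact ha
  have cb : ((b.den : ZMod p)) ≠ 0 := by
    rw [Ne, ZMod.natCast_eq_zero_iff]; exact hb
  have keyZ : ((a + b).num : ZMod p) * ((a.den : ZMod p) * (b.den : ZMod p))
      = ((a.num : ZMod p) * (b.den : ZMod p) + (a.den : ZMod p) * (b.num : ZMod p))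
        * (((a + b).den : ZMod p)) := by
    have h2 := congrArg (fun z : ℤ => (z : ZMod p)) key
    push_cast at h2
    exact h2
  rw [div_add_div _ _ ca cb, div_eq_div_iff cab (mul_ne_zero ca cb)]
  linear_combination keyZ

lemma ratval_sum (p : ℕ) [Fact p.Prime] (s : Finset ℕ) (f : ℕ → ℚ)
    (h : ∀ k ∈ s, ¬ p ∣ (f k).den) :
    ¬ p ∣ (∑ k ∈ s, f k).den ∧
    ((∑ k ∈ s, f k).num : ZMod p) / ((∑ k ∈ s, f k).den : ZMod p)
      = ∑ k ∈ s, ((f k).num : ZMod p) / ((f k).den : ZMod p) := by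
  classical
  have hp : p.Prime := Fact.out
  induction s using Finset.induction with
  | empty =>
    constructor
    · simp only [Finset.sum_empty]
      rw [show (0 : ℚ).den = 1 from rfl, Nat.dvd_one]
      exact hp.ne_one
    · simp
  | @insert a s ha ih =>
    have h1 : ¬ p ∣ (f a).den := h a (Finset.mem_insert_self a s)
    have h2 : ∀ k ∈ s, ¬ p ∣ (f k).den := fun k hk => h k (Finset.mem_insert_of_mem hk)
    obtain ⟨ihd, ihv⟩ := ih h2
    rw [Finset.sum_insert ha]
    obtain ⟨jd, jv⟩ := ratval_add p (f a) (∑ k ∈ s, f k) h1 ihd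
    refine ⟨jd, ?_⟩
    rw [jv, ihv, Finset.sum_insert ha]

/-- the generalized harmonic number `H_{2,(p-1)/2}` vanishes mod `p`. -/
theorem harmonic_two_half (p : ℕ) (hp : p.Prime) (hp5 : 5 ≤ p) :
    ratCongr p 1 (∑ k ∈ Finset.Icc 1 ((p - 1) / 2), (1 : ℚ) / (k : ℚ) ^ 2) 0 := by
  haveI : Fact p.Prime := ⟨hp⟩
  have hodd : Odd p := hp.odd_of_ne_two (by omega)
  obtain ⟨m, hm⟩ := hodd
  have hm2 : (p - 1) / 2 = m := by omega
  have hm1 : 2 ≤ m := by omega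
  rw [hm2]
  -- each term: numerator 1, denominator k^2
  have hterm : ∀ k ∈ Finset.Icc 1 m,
      ((1 : ℚ) / (k : ℚ) ^ 2).num = 1 ∧ ((1 : ℚ) / (k : ℚ) ^ 2).den = k ^ 2 := by
    intro k hk
    simp only [Finset.mem_Icc] at hk
    have hk0 : 0 < k ^ 2 := by
      have : 0 < k := hk.1
      positivity
    have hk2 : ((1 : ℚ) / (k : ℚ) ^ 2) = ((k ^ 2 : ℕ) : ℚ)⁻¹ := by
      push_cast; rw [one_div]
    rw [hk2, Rat.inv_natCast_num_of_pos hk0, Rat.inv_natCast_den_of_pos hk0]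
    exact ⟨rfl, rfl⟩
  have hterm_den : ∀ k ∈ Finset.Icc 1 m, ¬ p ∣ ((1 : ℚ) / (k : ℚ) ^ 2).den := by
    intro k hk
    rw [(hterm k hk).2]
    intro hdvd
    have hpk := Nat.Prime.dvd_of_dvd_pow hp hdvd
    simp only [Finset.mem_Icc] at hk
    have := Nat.le_of_dvd (by omega) hpk
    omega
  obtain ⟨hden, hval⟩ := ratval_sum p (Finset.Icc 1 m) (fun k => (1 : ℚ) / (k : ℚ) ^ 2)
    hterm_den
  -- rewrite each term value as k ^ (p - 3)
  have hpow : ∀ x : ZMod p, x ≠ 0 → (1 : ZMod p) / x ^ 2 = x ^ (p - 3) := by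
    intro x hx
    have h1 : x ^ (p - 3) * x ^ 2 = 1 := by
      rw [← pow_add]
      have h2 : p - 3 + 2 = p - 1 := by omega
      rw [h2, ZMod.pow_card_sub_one_eq_one hx]
    field_simp
    linear_combination -h1
  have hval2 : (((∑ k ∈ Finset.Icc 1 m, (1 : ℚ) / (k : ℚ) ^ 2).num : ZMod p))
      / (((∑ k ∈ Finset.Icc 1 m, (1 : ℚ) / (k : ℚ) ^ 2).den : ZMod p))
      = ∑ k ∈ Finset.Icc 1 m, ((k : ZMod p)) ^ (p - 3) := by
    rw [hval]
    refine Finset.sum_congr rfl fun k hk => ?_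
    obtain ⟨hn, hd⟩ := hterm k hk
    rw [hn, hd]
    simp only [Finset.mem_Icc] at hk
    have hx : ((k : ZMod p)) ≠ 0 := by
      rw [Ne, ZMod.natCast_eq_zero_iff]
      intro hdvd
      have := Nat.le_of_dvd (by omega) hdvd
      omega
    have h3 := hpow ((k : ZMod p)) hx
    rw [← h3]
    push_cast
    ring
  -- p - 3 is even
  have heven : Even (p - 3) := ⟨m - 1, by omega⟩
  -- the full sum over range p is zero
  have hfull : ∑ k ∈ Finset.range p, ((k : ZMod p)) ^ (p - 3) = 0 := by
    have h0 : ∑ x : ZMod p, x ^ (p - 3) = 0 := by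
      apply FiniteField.sum_pow_lt_card_sub_one
      rw [ZMod.card]; omega
    rw [← h0]
    refine Finset.sum_nbij' (fun k => ((k : ZMod p))) (fun x => x.val) ?_ ?_ ?_ ?_ ?_
    · intro a _; exact Finset.mem_univ _
    · intro x _; exact Finset.mem_range.mpr (ZMod.val_lt x)
    · intro a ha; exact ZMod.val_cast_of_lt (Finset.mem_range.mp ha)
    · intro x _; exact ZMod.natCast_rightInverse x
    · intro a _; rfl
  -- split the full sum
  have hsplit : ∑ k ∈ Finset.range p, ((k : ZMod p)) ^ (p - 3)
      = 2 * ∑ k ∈ Finset.Icc 1 m, ((k : ZMod p)) ^ (p - 3) := by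
    rw [Finset.range_eq_Ico]
    rw [← Finset.sum_Ico_consecutive (fun k => ((k : ZMod p)) ^ (p - 3))
      (Nat.zero_le 1) (by omega : 1 ≤ p)]
    rw [← Finset.sum_Ico_consecutive (fun k => ((k : ZMod p)) ^ (p - 3))
      (by omega : 1 ≤ m + 1) (by omega : m + 1 ≤ p)]
    have hz : ∑ k ∈ Finset.Ico (0 : ℕ) 1, ((k : ZMod p)) ^ (p - 3) = 0 := by
      rw [Nat.Ico_zero_eq_range, Finset.sum_range_one, Nat.cast_zero,
        zero_pow (by omega : p - 3 ≠ 0)]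
    have hIco : Finset.Ico 1 (m + 1) = Finset.Icc 1 m := by
      rw [Finset.Ico_add_one_right_eq_Icc]
    have hrefl : ∑ k ∈ Finset.Ico (m + 1) p, ((k : ZMod p)) ^ (p - 3)
        = ∑ k ∈ Finset.Icc 1 m, ((k : ZMod p)) ^ (p - 3) := by
      refine Finset.sum_nbij' (fun k => p - k) (fun k => p - k) ?_ ?_ ?_ ?_ ?_
      · intro a ha
        simp only [Finset.mem_Ico] at ha
        simp only [Finset.mem_Icc]
        omega
      · intro a ha
        simp only [Finset.mem_Icc] at ha
        simp only [Finset.mem_Ico]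
        omega
      · intro a ha
        simp only [Finset.mem_Ico] at ha
        show p - (p - a) = a
        omega
      · intro a ha
        simp only [Finset.mem_Icc] at ha
        show p - (p - a) = a
        omega
      · intro a ha
        simp only [Finset.mem_Ico] at ha
        have hle : a ≤ p := by omega
        have hc : ((p - a : ℕ) : ZMod p) = -(a : ZMod p) := by
          rw [Nat.cast_sub hle, ZMod.natCast_self]
          ring
        rw [hc, heven.neg_pow]
    rw [hz, hIco, hrefl]
    ring
  -- deduce the half sum vanishes
  have htwo : (2 : ZMod p) ≠ 0 := by
    have h2 : ((2 : ℕ) : ZMod p) ≠ 0 := by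
      rw [Ne, ZMod.natCast_eq_zero_iff]
      intro h
      have := Nat.le_of_dvd (by norm_num) h
      omega
    simpa using h2
  have hhalf : ∑ k ∈ Finset.Icc 1 m, ((k : ZMod p)) ^ (p - 3) = 0 := by
    have h3 := hsplit ▸ hfull
    exact (mul_eq_zero.mp h3).resolve_left htwo
  have hcast := hval2.trans hhalf
  -- p divides the numerator
  have hnum : (p : ℤ) ∣ (∑ k ∈ Finset.Icc 1 m, (1 : ℚ) / (k : ℚ) ^ 2).num := by
    rw [← ZMod.intCast_zmod_eq_zero_iff_dvd]
    have hden0 : (((∑ k ∈ Finset.Icc 1 m, (1 : ℚ) / (k : ℚ) ^ 2).den : ZMod p)) ≠ 0 := by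
      rw [Ne, ZMod.natCast_eq_zero_iff]; exact hden
    exact (div_eq_zero_iff.mp hcast).resolve_right hden0
  obtain ⟨n, hn⟩ := hnum
  refine ⟨(n : ℚ) / ((∑ k ∈ Finset.Icc 1 m, (1 : ℚ) / (k : ℚ) ^ 2).den : ℚ), ?_, ?_⟩
  · rw [sub_zero, pow_one]
    conv_lhs => rw [← Rat.num_div_den (∑ k ∈ Finset.Icc 1 m, (1 : ℚ) / (k : ℚ) ^ 2)]
    rw [hn]
    have hd0 : (((∑ k ∈ Finset.Icc 1 m, (1 : ℚ) / (k : ℚ) ^ 2).den : ℚ)) ≠ 0 :=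
      Nat.cast_ne_zero.mpr (∑ k ∈ Finset.Icc 1 m, (1 : ℚ) / (k : ℚ) ^ 2).den_ne_zero
    push_cast
    field_simp
  · intro hdvd
    have hd : (((n : ℚ) / ((∑ k ∈ Finset.Icc 1 m, (1 : ℚ) / (k : ℚ) ^ 2).den : ℚ)).den : ℤ)
        ∣ ((∑ k ∈ Finset.Icc 1 m, (1 : ℚ) / (k : ℚ) ^ 2).den : ℤ) := by
      have h4 := Rat.den_dvd n ((∑ k ∈ Finset.Icc 1 m, (1 : ℚ) / (k : ℚ) ^ 2).den : ℤ)
      rwa [Rat.divInt_eq_div, Int.cast_natCast] at h4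
    have h5 : ((n : ℚ) / ((∑ k ∈ Finset.Icc 1 m, (1 : ℚ) / (k : ℚ) ^ 2).den : ℚ)).den
        ∣ (∑ k ∈ Finset.Icc 1 m, (1 : ℚ) / (k : ℚ) ^ 2).den := Int.natCast_dvd_natCast.mp hd
    exact hden (dvd_trans hdvd h5)
end

section
/- Let p be an odd prime and let i be a positive odd integer with i ≢ 0, 1, 2 (mod p) and i ≢ 1, 3 (mod p−1). Then Σ_{r=1}^{(p−1)/2} r^{i−1} ≡ (2^{2−i} − 1)·B_{i−1}·p/2 (mod p³), where 2^{2−i} = 1/2^{i−2} is a rational number. -/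
set_option linter.unusedSectionVars false
set_option maxHeartbeats 1000000

open Finset PowerSeries

theorem bern_eval_add (n : ℕ) (x y : ℚ) :
    (Polynomial.bernoulli n).eval (x + y)
      = ∑ m ∈ range (n+1), (n.choose m : ℚ) * (Polynomial.bernoulli m).eval x * y^(n-m) := by
  have expand : ∀ (m : ℕ) (z : ℚ), (Polynomial.bernoulli m).eval z
      = ∑ j ∈ range (m+1), bernoulli j * (m.choose j : ℚ) * z^(m-j) := by
    intro m z
    rw [Polynomial.bernoulli, Polynomial.eval_finset_sum]
    exact Finset.sum_congr rfl fun j _ => by simp [Polynomial.eval_monomial]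
  rw [expand]
  simp_rw [expand, add_pow, Finset.mul_sum, Finset.sum_mul]
  rw [Finset.sum_sigma', Finset.sum_sigma']
  apply Finset.sum_nbij' (i := fun q => (⟨q.1 + q.2, q.1⟩ : Σ _ : ℕ, ℕ))
    (j := fun q => (⟨q.2, q.1 - q.2⟩ : Σ _ : ℕ, ℕ))
  · rintro ⟨i, l⟩ hq
    simp only [Finset.mem_sigma, Finset.mem_range] at hq ⊢
    omega
  · rintro ⟨m, j⟩ hq
    simp only [Finset.mem_sigma, Finset.mem_range] at hq ⊢
    omega
  · rintro ⟨i, l⟩ hq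
    simp only [Finset.mem_sigma, Finset.mem_range] at hq
    dsimp only
    rw [Nat.add_sub_cancel_left]
  · rintro ⟨m, j⟩ hq
    simp only [Finset.mem_sigma, Finset.mem_range] at hq
    dsimp only
    rw [Nat.add_sub_cancel' (by omega : j ≤ m)]
  · rintro ⟨i, l⟩ hq
    simp only [Finset.mem_sigma, Finset.mem_range] at hq
    dsimp only
    have hin : i + l ≤ n := by omega
    have hchoose : (n.choose (i+l) : ℚ) * ((i+l).choose i : ℚ) = (n.choose i : ℚ) * ((n-i).choose l : ℚ) := by
      rw [← Nat.cast_mul, ← Nat.cast_mul, Nat.choose_mul (n := n) (Nat.le_add_right i l)]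
      congr 3
      omega
    have h1 : (i + l) - i = l := by omega
    have h2 : n - i - l = n - (i + l) := by omega
    rw [h1, h2]
    linear_combination (bernoulli i * x ^ l * y ^ (n - (i+l))) * hchoose.symm


theorem bern_eval_half (n : ℕ) :
    (Polynomial.bernoulli n).eval (1/2 : ℚ) = (2/2^n - 1) * bernoulli n := by
  set r : ℚ⟦X⟧ := rescale ((1:ℚ)/2) (exp ℚ) with hrdef
  have h2C : (2 : ℚ⟦X⟧) * PowerSeries.C (R := ℚ) (1/2) = 1 := by
    rw [(map_ofNat (PowerSeries.C (R := ℚ)) 2).symm, ← map_mul]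
    norm_num
  have hexp : exp ℚ - 1 ≠ 0 := by
    intro h
    have := congrArg (coeff (R := ℚ) 1) h
    simp [coeff_exp] at this
  have hr : r * r = exp ℚ := by
    rw [hrdef, PowerSeries.exp_mul_exp_eq_exp_add]; norm_num
  have hX : rescale ((1:ℚ)/2) (X : ℚ⟦X⟧) = PowerSeries.C (R := ℚ) (1/2) * X := by
    ext m
    rcases eq_or_ne m 1 with h | h <;>
      simp [coeff_rescale, coeff_X, PowerSeries.coeff_C_mul, h]
  have hB : rescale ((1:ℚ)/2) (bernoulliPowerSeries ℚ) * (r - 1) = PowerSeries.C (R := ℚ) (1/2) * X := by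
    rw [← hX, hrdef, show rescale ((1:ℚ)/2) (exp ℚ) - 1
        = rescale ((1:ℚ)/2) (exp ℚ - 1) from by rw [map_sub, map_one], ← map_mul,
      bernoulliPowerSeries_mul_exp_sub_one]
  have key : (mk fun n => (Polynomial.aeval ((1:ℚ)/2)) ((1 / n.factorial : ℚ) • Polynomial.bernoulli n))
      = (2 : ℚ⟦X⟧) * (rescale ((1:ℚ)/2) (bernoulliPowerSeries ℚ)) - bernoulliPowerSeries ℚ := by
    apply mul_right_cancel₀ hexp
    rw [Polynomial.bernoulli_generating_function, ← hrdef]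
    have hfac : exp ℚ - 1 = (r - 1) * (r + 1) := by rw [← hr]; ring
    calc X * r = (2 : ℚ⟦X⟧) * (PowerSeries.C (R := ℚ) (1/2) * X) * (r + 1) - X := by
          rw [← mul_assoc, h2C]; ring
      _ = 2 * (rescale ((1:ℚ)/2) (bernoulliPowerSeries ℚ) * (r - 1)) * (r + 1) - X := by rw [hB]
      _ = (2 * rescale ((1:ℚ)/2) (bernoulliPowerSeries ℚ) - bernoulliPowerSeries ℚ) * (exp ℚ - 1) := by
          have := bernoulliPowerSeries_mul_exp_sub_one ℚ
          rw [hfac] at this ⊢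
          calc 2 * (rescale ((1:ℚ)/2) (bernoulliPowerSeries ℚ) * (r - 1)) * (r + 1) - X
              = 2 * (rescale ((1:ℚ)/2) (bernoulliPowerSeries ℚ)) * ((r-1)*(r+1))
                - bernoulliPowerSeries ℚ * ((r - 1) * (r + 1)) := by rw [← this]; ring
            _ = (2 * rescale ((1:ℚ)/2) (bernoulliPowerSeries ℚ) - bernoulliPowerSeries ℚ)
                * ((r - 1) * (r + 1)) := by ring
  have hc := congrArg (coeff (R := ℚ) n) key
  rw [coeff_mk, map_sub, (map_ofNat (PowerSeries.C (R := ℚ)) 2).symm,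
    PowerSeries.coeff_C_mul, coeff_rescale] at hc
  simp only [bernoulliPowerSeries, coeff_mk, Algebra.algebraMap_self, RingHom.id_apply] at hc
  rw [map_smul, smul_eq_mul,
    show (Polynomial.aeval ((1:ℚ)/2)) (Polynomial.bernoulli n)
      = (Polynomial.bernoulli n).eval ((1:ℚ)/2) from rfl] at hc
  have hfac : (n.factorial : ℚ) ≠ 0 := Nat.cast_ne_zero.2 n.factorial_ne_zero
  have h2n : (2:ℚ)^n ≠ 0 := by positivity
  field_simp at hc
  rw [hc, one_div, inv_pow]
  ring


/-- `x` is zero or has `p`-adic valuation at least `c`. -/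
def Vge (p : ℕ) (c : ℤ) (x : ℚ) : Prop := x = 0 ∨ c ≤ padicValRat p x

namespace Vge
variable {p : ℕ} [hp : Fact p.Prime] {c d : ℤ} {x y : ℚ}

theorem zero : Vge p c 0 := Or.inl rfl

theorem mono (h : d ≤ c) (hx : Vge p c x) : Vge p d x :=
  hx.imp id fun h' => le_trans h h'

theorem add (hx : Vge p c x) (hy : Vge p c y) : Vge p c (x + y) := by
  rcases hx with rfl | hx
  · simpa using hy
  rcases hy with rfl | hy
  · rw [add_zero]; exact Or.inr hx
  rcases eq_or_ne (x + y) 0 with h | h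
  · exact Or.inl h
  · exact Or.inr (le_trans (le_min hx hy) (padicValRat.min_le_padicValRat_add h))

theorem sum {α : Type*} {s : Finset α} {f : α → ℚ}
    (h : ∀ a ∈ s, Vge p c (f a)) : Vge p c (∑ a ∈ s, f a) := by
  induction s using Finset.cons_induction with
  | empty => simpa using zero
  | cons a s ha ih =>
    rw [Finset.sum_cons]
    exact add (h a (Finset.mem_cons_self a s)) (ih fun b hb => h b (Finset.mem_cons_of_mem hb))

theorem mul (hx : Vge p c x) (hy : Vge p d y) : Vge p (c + d) (x * y) := by
  rcases hx with rfl | hx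
  · simpa using zero
  rcases hy with rfl | hy
  · simpa using zero
  rcases eq_or_ne x 0 with rfl | hx0
  · simpa using zero
  rcases eq_or_ne y 0 with rfl | hy0
  · simpa using zero
  exact Or.inr (by rw [padicValRat.mul hx0 hy0]; exact add_le_add hx hy)

theorem natCast (n : ℕ) : Vge p 0 (n : ℚ) := by
  rcases eq_or_ne n 0 with rfl | h
  · simpa using zero
  · exact Or.inr (by rw [padicValRat.of_nat]; positivity)

theorem neg (hx : Vge p c x) : Vge p c (-x) := by
  rcases hx with rfl | hx
  · simpa using zero
  rcases eq_or_ne x 0 with rfl | hx0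
  · simpa using zero
  · exact Or.inr (by rwa [padicValRat.neg])

theorem sub (hx : Vge p c x) (hy : Vge p c y) : Vge p c (x - y) := by
  rw [sub_eq_add_neg]; exact hx.add hy.neg

theorem p_pow (e : ℕ) : Vge p e ((p : ℚ) ^ e) := by
  have hp0 : (p : ℚ) ≠ 0 := Nat.cast_ne_zero.2 hp.1.pos.ne'
  exact Or.inr (by
    rw [padicValRat.pow, padicValRat.self hp.1.one_lt]; simp)

theorem div_nat (hx : Vge p c x) (k : ℕ) (hk : k ≠ 0) :
    Vge p (c - padicValNat p k) (x / k) := by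
  rcases hx with rfl | hx
  · simpa using zero
  rcases eq_or_ne x 0 with rfl | hx0
  · simpa using zero
  have hk0 : (k : ℚ) ≠ 0 := Nat.cast_ne_zero.2 hk
  refine Or.inr ?_
  rw [padicValRat.div hx0 hk0, padicValRat.of_nat]
  omega

end Vge

theorem prime_dvd_sum_range_pow (p n : ℕ) [hp : Fact p.Prime] (hn : n ≠ 0)
    (h : ¬ (p - 1) ∣ n) : p ∣ ∑ x ∈ range p, x ^ n := by
  rw [← ZMod.natCast_eq_zero_iff]
  push_cast
  have hbij : ∑ x ∈ range p, (x : ZMod p) ^ n = ∑ a : ZMod p, a ^ n := by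
    refine Finset.sum_nbij' (fun x => (x : ZMod p)) (fun a => a.val) ?_ ?_ ?_ ?_ ?_
    · intro x _; exact Finset.mem_univ _
    · intro a _; exact Finset.mem_range.2 (ZMod.val_lt a)
    · intro x hx; exact ZMod.val_natCast_of_lt (Finset.mem_range.1 hx)
    · intro a _; exact ZMod.natCast_rightInverse a
    · intro x _; rfl
  rw [hbij]
  set m := n % (p - 1) with hm
  have hp1 : 0 < p - 1 := by have := hp.1.two_le; omega
  have hm0 : m ≠ 0 := fun h0 => h (Nat.dvd_of_mod_eq_zero h0)
  have hmlt : m < p - 1 := Nat.mod_lt _ hp1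
  have hpow : ∀ a : ZMod p, a ^ n = a ^ m := by
    intro a
    rcases eq_or_ne a 0 with rfl | ha
    · rw [zero_pow hn, zero_pow hm0]
    · conv_lhs => rw [← Nat.div_add_mod n (p - 1)]
      rw [pow_add, pow_mul, ZMod.pow_card_sub_one_eq_one ha, one_pow, one_mul]
  simp_rw [hpow]
  have := FiniteField.sum_pow_lt_card_sub_one (ZMod p) m (by rwa [ZMod.card])
  exact this

theorem choose_iden (n i : ℕ) (h : i ≤ n) :
    (n + 1).choose i * (n + 1 - i) = n.choose i * (n + 1) := by
  have e1 : n + 1 - i = (n - i) + 1 := by omega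
  calc (n+1).choose i * (n+1-i)
      = (n+1).choose ((n-i)+1) * ((n-i)+1) := by
        rw [← e1, ← Nat.choose_symm (show i ≤ n+1 by omega), e1]
    _ = (n+1) * n.choose (n-i) := (Nat.add_one_mul_choose_eq n (n-i)).symm
    _ = n.choose i * (n+1) := by rw [Nat.choose_symm h, mul_comm]

theorem padicValNat_le_sub_two {p k : ℕ} (hp3 : 3 ≤ p) (hk : 2 ≤ k) :
    padicValNat p k + 2 ≤ k := by
  have haux : ∀ w : ℕ, 1 ≤ w → w + 2 ≤ 3 ^ w := by
    intro w hw
    induction w with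
    | zero => omega
    | succ w ihw =>
      rcases Nat.eq_zero_or_pos w with rfl | hw1
      · norm_num
      · have h1 := ihw hw1
        have h2 : 3 ^ (w+1) = 3 * 3 ^ w := by ring
        omega
  set v := padicValNat p k with hv
  rcases Nat.eq_zero_or_pos v with hv0 | hv0
  · omega
  have hdvd : p ^ v ∣ k := pow_padicValNat_dvd
  have hle : p ^ v ≤ k := Nat.le_of_dvd (by omega) hdvd
  have h3 : 3 ^ v ≤ p ^ v := Nat.pow_le_pow_left hp3 v
  have := haux v hv0
  omega

theorem bernoulli_padic_bound (p : ℕ) [hp : Fact p.Prime] (hp3 : 3 ≤ p) (n : ℕ) :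
    Vge p (-1) (bernoulli n) ∧ (¬ (p - 1) ∣ n → Vge p 0 (bernoulli n)) := by
  induction n using Nat.strong_induction_on with
  | _ n ih =>
  rcases eq_or_ne n 0 with rfl | hn0
  · refine ⟨Or.inr ?_, fun h => absurd (dvd_zero _) h⟩
    rw [bernoulli_zero, padicValRat.one]; omega
  -- the key equation
  have hq1 : ((n : ℚ) + 1) ≠ 0 := by positivity
  have key : (p:ℚ) * bernoulli n = (∑ x ∈ range p, (x:ℚ)^n)
      - ∑ i ∈ range n, bernoulli i * ((n+1).choose i : ℚ) * (p:ℚ)^(n+1-i)/((n:ℚ)+1) := by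
    rw [sum_range_pow, Finset.sum_range_succ]
    have h1 : n + 1 - n = 1 := by omega
    have h2 : bernoulli n * ((n+1).choose n : ℚ) * (p:ℚ)^(n+1-n)/((n:ℚ)+1)
        = (p:ℚ) * bernoulli n := by
      rw [Nat.choose_succ_self_right, h1, pow_one]
      push_cast
      field_simp
    rw [h2]; ring
  -- each subtracted term has valuation ≥ 1
  have hterm : ∀ i ∈ range n, Vge p 1
      (bernoulli i * ((n+1).choose i : ℚ) * (p:ℚ)^(n+1-i)/((n:ℚ)+1)) := by
    intro i hi
    have hi' : i < n := Finset.mem_range.1 hi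
    have hk2 : 2 ≤ n + 1 - i := by omega
    have hkne : ((n+1-i : ℕ) : ℚ) ≠ 0 := by
      have : n+1-i ≠ 0 := by omega
      exact_mod_cast Nat.cast_ne_zero.2 this
    have hchoose : ((n+1).choose i : ℚ) * ((n+1-i : ℕ) : ℚ) = (n.choose i : ℚ) * ((n:ℚ)+1) := by
      have := choose_iden n i (by omega)
      exact_mod_cast this
    have heq : bernoulli i * ((n+1).choose i : ℚ) * (p:ℚ)^(n+1-i)/((n:ℚ)+1)
        = bernoulli i * (n.choose i : ℚ) * (p:ℚ)^(n+1-i) / ((n+1-i : ℕ) : ℚ) := by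
      rw [div_eq_div_iff hq1 hkne]
      linear_combination (bernoulli i * (p:ℚ)^(n+1-i)) * hchoose
    rw [heq]
    have h2 := ((ih i hi').1.mul (Vge.natCast (n.choose i))).mul (Vge.p_pow (n+1-i))
    have h3 := h2.div_nat (n+1-i) (by omega)
    refine h3.mono ?_
    have := padicValNat_le_sub_two hp3 hk2
    omega
  -- the power sum is a natural number
  have hS0 : Vge p 0 (∑ x ∈ range p, (x:ℚ)^n) := by
    have : (∑ x ∈ range p, (x:ℚ)^n) = ((∑ x ∈ range p, x^n : ℕ) : ℚ) := by push_cast; rfl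
    rw [this]; exact Vge.natCast _
  have hS1 : ¬ (p-1) ∣ n → Vge p 1 (∑ x ∈ range p, (x:ℚ)^n) := by
    intro h
    have hdvd := prime_dvd_sum_range_pow p n hn0 h
    have hTpos : 0 < ∑ x ∈ range p, x^n := by
      have h1p : 1 ∈ range p := Finset.mem_range.2 (by have := hp.1.two_le; omega)
      calc 0 < 1^n := by norm_num
        _ ≤ ∑ x ∈ range p, x^n := Finset.single_le_sum (f := fun x => x^n) (fun a _ => Nat.zero_le _) h1p
    have hval : 1 ≤ padicValNat p (∑ x ∈ range p, x^n) :=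
      one_le_padicValNat_of_dvd hTpos.ne' hdvd
    have hcast : (∑ x ∈ range p, (x:ℚ)^n) = ((∑ x ∈ range p, x^n : ℕ) : ℚ) := by push_cast; rfl
    rw [hcast]
    refine Or.inr ?_
    rw [padicValRat.of_nat]
    exact_mod_cast hval
  -- divide by p
  have hdiv : ∀ c : ℤ, Vge p c ((p:ℚ) * bernoulli n) → Vge p (c - 1) (bernoulli n) := by
    intro c hc
    rcases eq_or_ne (bernoulli n) 0 with hb | hb
    · exact Or.inl hb
    have hp0 : (p : ℚ) ≠ 0 := Nat.cast_ne_zero.2 hp.1.pos.ne'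
    rcases hc with hc | hc
    · exact absurd hc (mul_ne_zero hp0 hb)
    refine Or.inr ?_
    rw [padicValRat.mul hp0 hb, padicValRat.self hp.1.one_lt] at hc
    omega
  constructor
  · refine (hdiv 0 ?_).mono (by omega)
    rw [key]
    exact hS0.sub ((Vge.sum hterm).mono (by omega))
  · intro h
    refine (hdiv 1 ?_).mono (by omega)
    rw [key]
    exact (hS1 h).sub (Vge.sum hterm)


namespace Vge
variable {p : ℕ} [hp : Fact p.Prime] {c d : ℤ} {x y : ℚ}

theorem one : Vge p 0 (1 : ℚ) := Or.inr (by rw [padicValRat.one])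

theorem pow (e : ℕ) (hx : Vge p c x) : Vge p (e * c) (x ^ e) := by
  induction e with
  | zero => simpa using one
  | succ e ihe =>
    have h := ihe.mul hx
    rw [← pow_succ] at h
    exact h.mono (le_of_eq (by push_cast; ring))

theorem intCast (z : ℤ) : Vge p 0 (z : ℚ) := by
  rcases eq_or_ne z 0 with rfl | h
  · simpa using zero
  · refine Or.inr ?_
    rw [show ((z:ℚ)) = ((z:ℚ)) from rfl, padicValRat.of_int]
    positivity

end Vge

theorem not_dvd_den_of_vge {p : ℕ} [hp : Fact p.Prime] {x : ℚ}
    (h : 0 ≤ padicValRat p x) : ¬ p ∣ x.den := by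
  intro hd
  have hnum : ¬ (p:ℤ) ∣ x.num := by
    intro hn
    have hco := x.reduced
    have h1 : p ∣ x.num.natAbs := Int.natCast_dvd.mp hn
    have h2 : p ∣ Nat.gcd x.num.natAbs x.den := Nat.dvd_gcd h1 hd
    rw [hco] at h2
    exact Nat.Prime.one_lt hp.1 |>.ne' (Nat.le_antisymm (Nat.le_of_dvd one_pos h2) (Nat.one_le_iff_ne_zero.2 (Nat.Prime.ne_zero hp.1)) ▸ rfl)
  have h1 : padicValInt p x.num = 0 := padicValInt.eq_zero_of_not_dvd hnum
  have h2 : 1 ≤ padicValNat p x.den := one_le_padicValNat_of_dvd x.pos.ne' hd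
  have h3 : padicValRat p x = padicValInt p x.num - padicValNat p x.den := rfl
  omega


/-- Lehmer's congruence `(I)_i` holds modulo `p³`. -/
theorem lehmer_mod_p_cubed (p : ℕ) (hp : p.Prime) (hodd : Odd p)
    (i : ℕ) (hipos : 0 < i) (hiodd : Odd i)
    (h0 : ¬ i ≡ 0 [MOD p]) (h1 : ¬ i ≡ 1 [MOD p]) (h2 : ¬ i ≡ 2 [MOD p])
    (h1' : ¬ i ≡ 1 [MOD p - 1]) (h3' : ¬ i ≡ 3 [MOD p - 1]) :
    ratCongr p 3 (∑ r ∈ Finset.Icc 1 ((p - 1) / 2), (r : ℚ) ^ (i - 1))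
      ((1 / 2 ^ (i - 2) - 1) * bernoulli (i - 1) * (p : ℚ) / 2) := by
  haveI : Fact p.Prime := ⟨hp⟩
  obtain ⟨t, htp⟩ := hodd
  have hp3 : 3 ≤ p := by have := hp.two_le; omega
  have hi1 : i ≠ 1 := fun h => h1 (by rw [h])
  have hi3 : 3 ≤ i := by obtain ⟨s, hs⟩ := hiodd; omega
  obtain ⟨k, rfl⟩ : ∃ k, i = k + 1 := ⟨i - 1, by omega⟩
  have hk2 : 2 ≤ k := by omega
  have hkeven : k % 2 = 0 := by obtain ⟨s, hs⟩ := hiodd; omega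
  have hpi : ¬ p ∣ (k + 1) := fun hd => h0 (Nat.modEq_zero_iff_dvd.2 hd)
  have hp13 : ¬ (p - 1) ∣ (k - 2) := by
    intro hd
    refine h3' (((Nat.modEq_iff_dvd' (by omega : 3 ≤ k + 1)).2 ?_).symm)
    have : k + 1 - 3 = k - 2 := by omega
    rwa [this]
  have hp0 : (p : ℚ) ≠ 0 := Nat.cast_ne_zero.2 hp.pos.ne'
  have hpd2 : ¬ p ∣ 2 := by intro h; have := Nat.le_of_dvd two_pos h; omega
  -- the half integer point
  set m0 : ℕ := (p - 1) / 2 + 1 with hm0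
  have hncast : ((m0 : ℕ) : ℚ) = 1/2 + (p : ℚ)/2 := by
    have hm : m0 = t + 1 := by omega
    rw [hm, htp]
    push_cast
    ring
  -- rewrite the sum over Icc as a sum over range
  set S : ℚ := ∑ x ∈ range m0, (x : ℚ) ^ k with hS
  have hSsum : (∑ r ∈ Finset.Icc 1 ((p - 1) / 2), (r : ℚ) ^ ((k+1) - 1)) = S := by
    rw [hS, hm0, Finset.range_eq_Ico, Finset.sum_eq_sum_Ico_succ_bot (by omega) _,
      Finset.Ico_add_one_right_eq_Icc]
    simp [zero_pow (show k ≠ 0 by omega)]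
  -- Bernoulli number of odd index vanishes
  have hBi : bernoulli (k + 1) = 0 := by
    rw [bernoulli_eq_bernoulli'_of_ne_one (by omega)]
    exact bernoulli'_eq_zero_of_odd hiodd (by omega)
  -- the target main term
  set c : ℕ → ℚ := fun m => (2/2^m - 1) * bernoulli m with hc
  set M : ℚ := (1 / 2 ^ ((k+1) - 2) - 1) * bernoulli ((k+1) - 1) * (p : ℚ) / 2 with hMdef
  have hM : M = c k * ((p:ℚ)/2) := by
    rw [hMdef, hc]
    have e1 : (k+1) - 2 = k - 1 := by omega
    have e2 : (k+1) - 1 = k := by omega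
    rw [e1, e2]
    have h2k : (2:ℚ)^k = 2^(k-1) * 2 := by
      rw [← pow_succ]
      congr 1
      omega
    have h2ne : (2:ℚ)^(k-1) ≠ 0 := by positivity
    show (1 / 2 ^ (k - 1) - 1) * bernoulli k * (p:ℚ) / 2 = (2 / 2 ^ k - 1) * bernoulli k * ((p:ℚ) / 2)
    rw [h2k]
    field_simp
  -- the key identity
  have heval := Polynomial.bernoulli_succ_eval m0 k
  rw [show (k : ℕ).succ = k + 1 from rfl, hBi, zero_add, hncast] at heval
  rw [bern_eval_add (k+1) (1/2 : ℚ) ((p:ℚ)/2)] at heval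
  simp_rw [bern_eval_half] at heval
  -- heval : ∑ m ∈ range (k+2), C(k+1,m) * c m * (p/2)^(k+1-m) = (k+1) * S
  rw [Finset.sum_range_succ, Finset.sum_range_succ] at heval
  have hlast : ((k+1).choose (k+1) : ℚ) * ((2/2^(k+1) - 1) * bernoulli (k+1)) * ((p:ℚ)/2)^((k+1)-(k+1)) = 0 := by
    rw [hBi]; ring
  have hmain : ((k+1).choose k : ℚ) * ((2/2^k - 1) * bernoulli k) * ((p:ℚ)/2)^((k+1)-k) = ((k:ℚ)+1) * (c k * ((p:ℚ)/2)) := by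
    rw [Nat.choose_succ_self_right, show (k+1) - k = 1 by omega, pow_one, hc]
    push_cast
    ring
  rw [hlast, add_zero, hmain] at heval
  -- key : (k+1) * (S - M) = small sum
  have key : ((k:ℚ)+1) * (S - M) = ∑ m ∈ range k,
      ((k+1).choose m : ℚ) * ((2/2^m - 1) * bernoulli m) * ((p:ℚ)/2)^((k+1)-m) := by
    rw [hM]
    linarith [heval]
  -- valuation of p/2
  have hhalf : Vge p 1 ((p:ℚ)/2) := by
    refine Or.inr ?_
    have hne2 : (2:ℚ) ≠ 0 := two_ne_zero
    rw [padicValRat.div hp0 hne2, padicValRat.self hp.one_lt,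
      show ((2:ℚ)) = ((2:ℕ):ℚ) by norm_num, padicValRat.of_nat,
      padicValNat.eq_zero_of_not_dvd hpd2]
    simp
  -- valuation of 2/2^m - 1
  have hfrac : ∀ m : ℕ, Vge p 0 ((2:ℚ)/2^m - 1) := by
    intro m
    have hrw : (2:ℚ)/2^m - 1 = ((2 - 2^m : ℤ) : ℚ) / ((2^m : ℕ) : ℚ) := by
      have : ((2:ℚ))^m ≠ 0 := by positivity
      push_cast
      field_simp
    rw [hrw]
    have hnd : ¬ p ∣ 2^m := fun h => hpd2 (hp.dvd_of_dvd_pow h)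
    have := (Vge.intCast (p := p) (2 - 2^m : ℤ)).div_nat (2^m) (by positivity)
    rw [padicValNat.eq_zero_of_not_dvd hnd] at this
    simpa using this
  -- each term of the small sum has valuation ≥ 3
  have hterm : ∀ m ∈ range k, Vge p 3
      (((k+1).choose m : ℚ) * ((2/2^m - 1) * bernoulli m) * ((p:ℚ)/2)^((k+1)-m)) := by
    intro m hm
    have hmk : m < k := Finset.mem_range.1 hm
    rcases Nat.even_or_odd m with hme | hmo
    · -- m even : use integrality of bernoulli m
      have he2 : 2 ≤ (k+1) - m := by omega
      have heodd : ((k+1) - m) % 2 = 1 := by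
        obtain ⟨s, hs⟩ := hme
        omega
      have hBm : Vge p (-1) (bernoulli m) := (bernoulli_padic_bound p hp3 m).1
      rcases (show (k+1) - m = 3 ∨ 4 ≤ (k+1) - m by omega) with he3 | he4
      · -- the critical term with (p/2)^3 : use h3'
        have hmval : m = k - 2 := by omega
        have hBm0 : Vge p 0 (bernoulli m) :=
          (bernoulli_padic_bound p hp3 m).2 (by rw [hmval]; exact hp13)
        have hb := ((Vge.natCast ((k+1).choose m)).mul ((hfrac m).mul hBm0)).mul
          ((hhalf.pow ((k+1) - m)))
        refine hb.mono ?_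
        rw [he3]
        omega
      · have hb := ((Vge.natCast ((k+1).choose m)).mul ((hfrac m).mul hBm)).mul
          ((hhalf.pow ((k+1) - m)))
        refine hb.mono ?_
        omega
    · -- m odd : the term vanishes
      rcases eq_or_ne m 1 with rfl | hm1
      · have : ((2:ℚ)/2^1 - 1) = 0 := by norm_num
        rw [this]
        simpa using Vge.zero
      · have : bernoulli m = 0 := by
          rw [bernoulli_eq_bernoulli'_of_ne_one hm1]
          exact bernoulli'_eq_zero_of_odd hmo (by
            rcases hmo with ⟨s, hs⟩
            omega)
        rw [this]
        simpa using Vge.zero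
  -- the difference has valuation ≥ 3
  have hD3 : Vge p 3 (S - M) := by
    have hDsum : Vge p 3 (((k:ℚ)+1) * (S - M)) := by
      rw [key]
      exact Vge.sum hterm
    rcases eq_or_ne (S - M) 0 with hD0 | hD0
    · exact Or.inl hD0
    have hk1 : ((k:ℚ)+1) ≠ 0 := by positivity
    rcases hDsum with h | h
    · exact absurd h (mul_ne_zero hk1 hD0)
    refine Or.inr ?_
    rw [padicValRat.mul hk1 hD0] at h
    have hkval : padicValRat p ((k:ℚ)+1) = 0 := by
      rw [show ((k:ℚ)+1) = (((k+1 : ℕ)):ℚ) by push_cast; ring, padicValRat.of_nat,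
        padicValNat.eq_zero_of_not_dvd hpi]
      simp
    omega
  -- conclude
  refine ⟨(S - M) / (p:ℚ)^3, ?_, ?_⟩
  · rw [hSsum]
    field_simp
  · rcases hD3 with hD0 | hv
    · rw [hD0, zero_div]
      intro h
      rw [show (0:ℚ).den = 1 from rfl, Nat.dvd_one] at h
      omega
    · apply not_dvd_den_of_vge
      have hD0 : S - M ≠ 0 := by
        intro h0
        rw [h0] at hv
        norm_num [padicValRat] at hv
      have hppow : ((p:ℚ))^3 ≠ 0 := by positivity
      rw [padicValRat.div hD0 hppow, padicValRat.pow, padicValRat.self hp.one_lt]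
      omega
end

section
/- Let p be an odd prime, let i be a positive integer with gcd(i,p) = 1, i ≢ 0 (mod p−1) and i ≢ 1 (mod p−1), and let a be an integer with 1 ≤ a ≤ p−1. Let a' ∈ {1,…,p−1} be the least positive residue of the inverse of a modulo p. Then (B_i/i)·(1/a^i − 1) ≡ Σ_{b=1}^{p−1} ⌊b·a'/p⌋·r(b·a')^{i−1} (mod p), where 1/a^i is the rational reciprocal of a^i and r(x) ∈ {0,…,p−1} denotes the least nonnegative residue of x modulo p. -/
variable {p : ℕ} [hp : Fact p.Prime]

lemma padicNorm_le_one_iff_den (q : ℚ) : padicNorm p q ≤ 1 ↔ ¬ p ∣ q.den := by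
  constructor
  · intro h hdvd
    have hq : q ≠ 0 := by
      rintro rfl
      rw [Rat.den_zero, Nat.dvd_one] at hdvd
      exact hp.out.one_lt.ne' hdvd
    have hnum : ¬ (p:ℤ) ∣ q.num := by
      intro hd
      have hd' : p ∣ q.num.natAbs := Int.natCast_dvd_natCast.mp (Int.dvd_natAbs.mpr hd)
      exact hp.out.one_lt.ne' (Nat.eq_one_of_dvd_coprimes q.reduced hd' hdvd)
    have h1 : padicValInt p q.num = 0 := padicValInt.eq_zero_of_not_dvd hnum
    have h2 : 1 ≤ padicValNat p q.den :=
      one_le_padicValNat_of_dvd q.den_pos.ne' hdvd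
    rw [padicNorm.eq_zpow_of_nonzero hq, padicValRat_def, h1] at h
    have hp1 : (1:ℚ) < (p:ℚ) := by exact_mod_cast hp.out.one_lt
    have : (p:ℚ) ^ (1:ℤ) ≤ (p:ℚ) ^ (-((padicValInt p q.num:ℤ) - (padicValNat p q.den : ℤ))) := by
      apply zpow_le_zpow_right₀ hp1.le
      rw [h1]; omega
    rw [h1] at this
    simp only [zpow_one] at this
    linarith [h, this]
  · intro h
    rcases eq_or_ne q 0 with rfl | hq
    · simp [padicNorm]
    · rw [padicNorm.eq_zpow_of_nonzero hq]
      have hden : padicValNat p q.den = 0 := padicValNat.eq_zero_of_not_dvd h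
      rw [padicValRat_def, hden]
      have hp1 : (1:ℚ) ≤ (p:ℚ) := by exact_mod_cast hp.out.one_lt.le
      calc (p:ℚ) ^ (-((padicValInt p q.num : ℤ) - (0:ℕ))) ≤ (p:ℚ)^(0:ℤ) :=
            zpow_le_zpow_right₀ hp1 (by omega)
        _ = 1 := by simp
variable {p : ℕ} [hp : Fact p.Prime]

lemma choose_id {i j : ℕ} (hj : j ≤ i) :
    (i+1) * i.choose j = (i-j+1) * (i+1).choose j := by
  have h := Nat.add_one_mul_choose_eq i (i-j)
  rw [Nat.choose_symm hj] at h
  have h2 : (i+1).choose (i-j+1) = (i+1).choose j := by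
    have e : i - j + 1 = (i+1) - j := by omega
    rw [e, Nat.choose_symm (by omega)]
  rw [h2] at h
  rw [h, Nat.mul_comm]

lemma bernoulli_rec (i : ℕ) :
    bernoulli i = (∑ k ∈ Finset.range p, (k:ℚ)^i) / p
      - ∑ j ∈ Finset.range i,
          bernoulli j * (i.choose j : ℚ) * ((p:ℚ)^(i-j) / ((i-j+1 : ℕ) : ℚ)) := by
  have hp0 : (p:ℚ) ≠ 0 := by exact_mod_cast hp.out.ne_zero
  have h := sum_range_pow p i
  rw [Finset.sum_range_succ] at h
  have hlast : bernoulli i * (((i+1).choose i : ℕ) : ℚ) * (p:ℚ)^(i+1-i) / ((i:ℚ)+1)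
      = bernoulli i * p := by
    rw [Nat.choose_succ_self_right]
    have e : i + 1 - i = 1 := by omega
    rw [e, pow_one]
    have hi1 : ((i:ℚ)+1) ≠ 0 := by positivity
    field_simp
    push_cast
    ring
  have key : ∀ j ∈ Finset.range i,
      (bernoulli j * (((i+1).choose j : ℕ):ℚ) * (p:ℚ)^(i+1-j) / ((i:ℚ)+1)) / p
        = bernoulli j * (i.choose j : ℚ) * ((p:ℚ)^(i-j) / ((i-j+1 : ℕ):ℚ)) := by
    intro j hj
    have hj' : j ≤ i := le_of_lt (Finset.mem_range.mp hj)
    have hidQ : ((i:ℚ)+1) * (i.choose j : ℚ)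
        = ((i-j+1 : ℕ):ℚ) * (((i+1).choose j : ℕ) : ℚ) := by
      exact_mod_cast choose_id hj'
    have hpow : (p:ℚ)^(i+1-j) = (p:ℚ)^(i-j) * p := by
      rw [← pow_succ]; congr 1; omega
    have hne1 : ((i:ℚ)+1) ≠ 0 := by positivity
    have hne2 : ((i-j+1:ℕ):ℚ) ≠ 0 := by
      have : (0:ℕ) < i - j + 1 := by omega
      exact_mod_cast this.ne'
    have hdiv : (((i+1).choose j : ℕ):ℚ) / ((i:ℚ)+1) = (i.choose j : ℚ) / ((i-j+1:ℕ):ℚ) := by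
      rw [div_eq_div_iff hne1 hne2]
      linear_combination -hidQ
    calc bernoulli j * (((i+1).choose j : ℕ):ℚ) * (p:ℚ)^(i+1-j) / ((i:ℚ)+1) / p
        = bernoulli j * ((((i+1).choose j : ℕ):ℚ) / ((i:ℚ)+1)) * (p:ℚ)^(i-j) := by
          rw [hpow]; field_simp
      _ = bernoulli j * (i.choose j : ℚ) * ((p:ℚ)^(i-j) / ((i-j+1 : ℕ):ℚ)) := by
          rw [hdiv]; ring
  rw [← Finset.sum_congr rfl key, ← Finset.sum_div, ← sub_div, eq_div_iff hp0]
  linear_combination - h - hlast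

lemma nu_mul3_le {x y z : ℚ} {X Y Z : ℚ} (hx : padicNorm p x ≤ X) (hy : padicNorm p y ≤ Y)
    (hz : padicNorm p z ≤ Z) (hX : 0 ≤ X) (hZ : 0 ≤ Z) :
    padicNorm p (x*y*z) ≤ X*Y*Z := by
  rw [padicNorm.mul, padicNorm.mul]
  exact mul_le_mul (mul_le_mul hx hy (padicNorm.nonneg _) hX) hz (padicNorm.nonneg _)
    (mul_nonneg hX (le_trans (padicNorm.nonneg _) hy))

lemma nu_natCast_div_p_le (N : ℕ) : padicNorm p ((N:ℚ)/p) ≤ p := by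
  have hp0 : (0:ℚ) ≤ p := by positivity
  rw [padicNorm.div, padicNorm.padicNorm_p_of_prime, div_eq_mul_inv, inv_inv]
  calc padicNorm p (N:ℚ) * p ≤ 1 * p :=
        mul_le_mul_of_nonneg_right (padicNorm.of_nat N) hp0
    _ = p := one_mul _
lemma nu_pow_div_nat (m c : ℕ) (hc : c ≠ 0) :
    padicNorm p ((p:ℚ)^m / c) = (p:ℚ) ^ ((padicValNat p c : ℤ) - m) := by
  have hp0 : (p:ℚ) ≠ 0 := by exact_mod_cast hp.out.ne_zero
  have hc0 : (c:ℚ) ≠ 0 := by exact_mod_cast hc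
  have hq : (p:ℚ)^m / c ≠ 0 := by positivity
  rw [padicNorm.eq_zpow_of_nonzero hq, padicValRat.div (pow_ne_zero m hp0) hc0,
    padicValRat.pow (q := (p:ℚ)), padicValRat.self hp.out.one_lt, ← padicValRat.of_nat]
  ring_nf

lemma valNat_succ_le (m : ℕ) : padicValNat p (m+1) ≤ m := by
  have h1 : p ^ padicValNat p (m+1) ≤ m + 1 := Nat.le_of_dvd (by omega) pow_padicValNat_dvd
  have h2 : m + 1 < p ^ (m+1) := Nat.lt_pow_self hp.out.one_lt
  have := (Nat.pow_lt_pow_iff_right hp.out.one_lt).mp (lt_of_le_of_lt h1 h2)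
  omega

lemma three_le_p (hodd : Odd p) : 3 ≤ p := by
  have h2 := hp.out.two_le
  rcases Nat.lt_or_ge p 3 with h | h
  · interval_cases p
    exact absurd hodd (by decide)
  · exact h

lemma succ_lt_three_pow (m : ℕ) (hm : 1 ≤ m) : m + 1 < 3 ^ m := by
  induction m, hm using Nat.le_induction with
  | base => norm_num
  | succ n hn ih =>
    have h3 : (3:ℕ)^(n+1) = 3 * 3^n := by ring
    omega

lemma succ_succ_lt_three_pow (m : ℕ) (hm : 2 ≤ m) : m + 2 < 3 ^ m := by
  induction m, hm using Nat.le_induction with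
  | base => norm_num
  | succ n hn ih =>
    have h3 : (3:ℕ)^(n+1) = 3 * 3^n := by ring
    omega

lemma valNat_succ_le_sub_one (hodd : Odd p) (m : ℕ) (hm : 1 ≤ m) :
    padicValNat p (m+1) ≤ m - 1 := by
  have h3 := three_le_p (p := p) hodd
  have h1 : p ^ padicValNat p (m+1) ≤ m + 1 := Nat.le_of_dvd (by omega) pow_padicValNat_dvd
  have h2 : m + 1 < 3 ^ m := succ_lt_three_pow m hm
  have h2' : (3:ℕ) ^ m ≤ p ^ m := Nat.pow_le_pow_left h3 m
  have := (Nat.pow_lt_pow_iff_right hp.out.one_lt).mp (lt_of_le_of_lt h1 (lt_of_lt_of_le h2 h2'))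
  omega

lemma valNat_succ_le_sub_two (hodd : Odd p) (m : ℕ) (hm : 2 ≤ m)
    (hexc : ¬ (p = 3 ∧ m = 2)) : padicValNat p (m+1) ≤ m - 2 := by
  have h3 := three_le_p (p := p) hodd
  have h1 : p ^ padicValNat p (m+1) ≤ m + 1 := Nat.le_of_dvd (by omega) pow_padicValNat_dvd
  have key : m + 1 < p ^ (m - 1) := by
    rcases Nat.eq_or_lt_of_le hm with h | h
    · have hp4 : 4 ≤ p := by
        have : p ≠ 3 := fun hh => hexc ⟨hh, h.symm⟩
        omega
      have hm1 : m - 1 = 1 := by omega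
      rw [hm1, pow_one]; omega
    · have h2 : (m - 1) + 2 < 3 ^ (m-1) := succ_succ_lt_three_pow (m-1) (by omega)
      have h2' : (3:ℕ) ^ (m-1) ≤ p ^ (m-1) := Nat.pow_le_pow_left h3 (m-1)
      omega
  have := (Nat.pow_lt_pow_iff_right hp.out.one_lt).mp (lt_of_le_of_lt h1 key)
  omega

lemma nu_pow (q : ℚ) (n : ℕ) : padicNorm p (q ^ n) = padicNorm p q ^ n := by
  induction n with
  | zero => simp [padicNorm.one]
  | succ n ih => rw [pow_succ, pow_succ, padicNorm.mul, ih]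

lemma nu_bernoulli_le (i : ℕ) : padicNorm p (bernoulli i) ≤ (p:ℚ) := by
  induction i using Nat.strong_induction_on with
  | _ i IH =>
  have hp1 : (1:ℚ) ≤ p := by exact_mod_cast hp.out.one_le
  have hp0 : (0:ℚ) ≤ p := by positivity
  rcases Nat.eq_zero_or_pos i with rfl | hi
  · simpa [padicNorm.one] using hp1
  rw [bernoulli_rec (p := p) i]
  refine le_trans padicNorm.sub (max_le ?_ ?_)
  · have hcast : (∑ k ∈ Finset.range p, (k:ℚ)^i) = ((∑ k ∈ Finset.range p, k^i : ℕ) : ℚ) := by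
      push_cast; rfl
    rw [hcast]
    exact nu_natCast_div_p_le _
  · apply padicNorm.sum_le ⟨0, Finset.mem_range.mpr hi⟩
    intro j hj
    have hj' : j < i := Finset.mem_range.mp hj
    have hv : padicValNat p (i - j + 1) ≤ i - j := valNat_succ_le _
    have hx : padicNorm p ((p:ℚ)^(i-j) / ((i-j+1 : ℕ):ℚ)) ≤ 1 := by
      rw [nu_pow_div_nat _ _ (by omega)]
      calc (p:ℚ) ^ ((padicValNat p (i-j+1) : ℤ) - ((i-j:ℕ):ℤ)) ≤ (p:ℚ)^(0:ℤ) :=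
          zpow_le_zpow_right₀ hp1 (by omega)
        _ = 1 := zpow_zero _
    calc padicNorm p (bernoulli j * ((i.choose j : ℕ) : ℚ) * ((p:ℚ)^(i-j) / ((i-j+1 : ℕ):ℚ)))
        ≤ (p:ℚ) * 1 * 1 :=
          nu_mul3_le (IH j hj') (padicNorm.of_nat _) hx hp0 zero_le_one
      _ = p := by ring

lemma sum_range_pow_dvd (i : ℕ) (hi : i ≠ 0) (h0 : ¬ (p-1) ∣ i) :
    p ∣ ∑ k ∈ Finset.range p, k^i := by
  classical
  have : ((∑ k ∈ Finset.range p, k^i : ℕ) : ZMod p) = 0 := by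
    push_cast
    have hbij : ∑ k ∈ Finset.range p, ((k : ZMod p))^i = ∑ x : ZMod p, x^i :=
      Finset.sum_nbij' (fun k => ((k : ZMod p))) ZMod.val (fun a _ => Finset.mem_univ _)
        (fun b _ => Finset.mem_range.mpr b.val_lt)
        (fun a ha => ZMod.val_cast_of_lt (Finset.mem_range.mp ha))
        (fun b _ => ZMod.natCast_rightInverse b) (fun a _ => rfl)
    rw [hbij]
    let φ : (ZMod p)ˣ ↪ ZMod p := ⟨fun x => x, Units.val_injective⟩
    have hmap : Finset.univ.map φ = Finset.univ \ {0} := by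
      ext x
      simpa only [Finset.mem_map, Finset.mem_univ, Function.Embedding.coeFn_mk, true_and,
        Finset.mem_sdiff, Finset.mem_singleton, φ] using
          (show (∃ a : (ZMod p)ˣ, (a : ZMod p) = x) ↔ ¬x = 0 from isUnit_iff_ne_zero)
    have hcard : Fintype.card (ZMod p) = p := ZMod.card p
    calc ∑ x : ZMod p, x ^ i = ∑ x ∈ Finset.univ \ {(0 : ZMod p)}, x ^ i := by
          rw [← Finset.sum_sdiff (Finset.subset_univ {(0 : ZMod p)}), Finset.sum_singleton,
            zero_pow hi, add_zero]
      _ = ∑ x : (ZMod p)ˣ, ((x : ZMod p)) ^ i := by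
          simp [φ, ← hmap, Finset.sum_map]
      _ = 0 := by
          rw [FiniteField.sum_pow_units, if_neg]
          rwa [hcard]
  exact (ZMod.natCast_eq_zero_iff _ _).mp this

lemma nu_natCast_dvd_le (N : ℕ) (h : p ∣ N) : padicNorm p (N:ℚ) ≤ (p:ℚ)⁻¹ := by
  have h' : ((p^1 : ℕ) : ℤ) ∣ (N : ℤ) := by
    rw [pow_one]; exact_mod_cast h
  have := padicNorm.dvd_iff_norm_le (p := p) (n := 1) (z := (N:ℤ)) |>.mp h'
  simpa [zpow_neg, zpow_one] using this

lemma nu_bernoulli_le_one (hodd : Odd p) (i : ℕ) (h0 : ¬ (p-1) ∣ i) :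
    padicNorm p (bernoulli i) ≤ 1 := by
  have hp1 : (1:ℚ) ≤ p := by exact_mod_cast hp.out.one_le
  have hp0 : (0:ℚ) ≤ p := by positivity
  have hpne : (p:ℚ) ≠ 0 := by positivity
  have hi : i ≠ 0 := by rintro rfl; exact h0 (dvd_zero _)
  rw [bernoulli_rec (p := p) i]
  refine le_trans padicNorm.sub (max_le ?_ ?_)
  · have hcast : (∑ k ∈ Finset.range p, (k:ℚ)^i) = ((∑ k ∈ Finset.range p, k^i : ℕ) : ℚ) := by
      push_cast; rfl
    rw [hcast, padicNorm.div, padicNorm.padicNorm_p_of_prime, div_eq_mul_inv, inv_inv]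
    calc padicNorm p ((∑ k ∈ Finset.range p, k^i : ℕ):ℚ) * p ≤ (p:ℚ)⁻¹ * p :=
          mul_le_mul_of_nonneg_right (nu_natCast_dvd_le _ (sum_range_pow_dvd i hi h0)) hp0
      _ = 1 := inv_mul_cancel₀ hpne
  · apply padicNorm.sum_le ⟨0, Finset.mem_range.mpr (by omega)⟩
    intro j hj
    have hj' : j < i := Finset.mem_range.mp hj
    have hv : padicValNat p (i - j + 1) ≤ (i - j) - 1 :=
      valNat_succ_le_sub_one hodd _ (by omega)
    have hx : padicNorm p ((p:ℚ)^(i-j) / ((i-j+1 : ℕ):ℚ)) ≤ (p:ℚ)^(-1:ℤ) := by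
      rw [nu_pow_div_nat _ _ (by omega)]
      exact zpow_le_zpow_right₀ hp1 (by omega)
    calc padicNorm p (bernoulli j * ((i.choose j : ℕ) : ℚ) * ((p:ℚ)^(i-j) / ((i-j+1 : ℕ):ℚ)))
        ≤ (p:ℚ) * 1 * (p:ℚ)^(-1:ℤ) :=
          nu_mul3_le (nu_bernoulli_le j) (padicNorm.of_nat _) hx hp0 (by positivity)
      _ = 1 := by
          rw [zpow_neg, zpow_one]
          field_simp

lemma nu_L3 (hodd : Odd p) (i : ℕ) (hi : 1 ≤ i) (h0 : ¬ (p-1) ∣ i) (h1 : ¬ (p-1) ∣ (i-1)) :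
    padicNorm p ((∑ k ∈ Finset.range p, (k:ℚ)^i) / p - bernoulli i) ≤ (p:ℚ)⁻¹ := by
  have hp1 : (1:ℚ) ≤ p := by exact_mod_cast hp.out.one_le
  have hp0 : (0:ℚ) ≤ p := by positivity
  have hpne : (p:ℚ) ≠ 0 := by positivity
  have hrec := bernoulli_rec (p := p) i
  have heq : (∑ k ∈ Finset.range p, (k:ℚ)^i) / p - bernoulli i
      = ∑ j ∈ Finset.range i,
          bernoulli j * ((i.choose j : ℕ) : ℚ) * ((p:ℚ)^(i-j) / ((i-j+1 : ℕ) : ℚ)) := by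
    rw [hrec]; ring
  rw [heq]
  apply padicNorm.sum_le ⟨0, Finset.mem_range.mpr (by omega)⟩
  intro j hj
  have hj' : j < i := Finset.mem_range.mp hj
  set m := i - j with hm
  have hm1 : 1 ≤ m := by omega
  have hterm : padicNorm p (bernoulli j * ((i.choose j : ℕ) : ℚ)
      * ((p:ℚ)^(i-j) / ((i-j+1 : ℕ):ℚ))) ≤ (p:ℚ)⁻¹ := by
    rcases Nat.eq_or_lt_of_le hm1 with hm1' | hm2
    · -- m = 1 : j = i - 1
      have hj1 : j = i - 1 := by omega
      have hB : padicNorm p (bernoulli j) ≤ 1 := nu_bernoulli_le_one hodd j (hj1 ▸ h1)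
      have hv : padicValNat p (i - j + 1) = 0 := by
        have e2 : i - j + 1 = 2 := by omega
        rw [e2]
        refine padicValNat.eq_zero_of_not_dvd (fun hd => ?_)
        have := Nat.le_of_dvd (by norm_num) hd
        have := three_le_p (p := p) hodd
        omega
      have hx : padicNorm p ((p:ℚ)^(i-j) / ((i-j+1 : ℕ):ℚ)) ≤ (p:ℚ)^(-1:ℤ) := by
        rw [nu_pow_div_nat _ _ (by omega), hv]
        exact zpow_le_zpow_right₀ hp1 (by omega)
      calc padicNorm p _ ≤ (1:ℚ) * 1 * (p:ℚ)^(-1:ℤ) :=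
            nu_mul3_le hB (padicNorm.of_nat _) hx zero_le_one (by positivity)
        _ = (p:ℚ)⁻¹ := by rw [zpow_neg, zpow_one]; ring
    · -- m ≥ 2
      by_cases hexc : p = 3 ∧ m = 2
      · -- p = 3, m = 2, use h0 : ¬ 2 ∣ i
        obtain ⟨hp3, hm2'⟩ := hexc
        have hji : ¬ (p - 1) ∣ j := by
          rw [hp3] at h0 ⊢
          simp only [show (3:ℕ) - 1 = 2 from rfl] at h0 ⊢
          omega
        have hB : padicNorm p (bernoulli j) ≤ 1 := nu_bernoulli_le_one hodd j hji
        have hv : padicValNat p (i - j + 1) = 1 := by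
          have : i - j + 1 = 3 := by omega
          rw [this, hp3]
          exact padicValNat.self (by norm_num)
        have hx : padicNorm p ((p:ℚ)^(i-j) / ((i-j+1 : ℕ):ℚ)) ≤ (p:ℚ)^(-1:ℤ) := by
          rw [nu_pow_div_nat _ _ (by omega), hv]
          exact zpow_le_zpow_right₀ hp1 (by omega)
        calc padicNorm p _ ≤ (1:ℚ) * 1 * (p:ℚ)^(-1:ℤ) :=
              nu_mul3_le hB (padicNorm.of_nat _) hx zero_le_one (by positivity)
          _ = (p:ℚ)⁻¹ := by rw [zpow_neg, zpow_one]; ring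
      · have hv : padicValNat p (i - j + 1) ≤ m - 2 :=
          valNat_succ_le_sub_two hodd m (by omega) hexc
        have hx : padicNorm p ((p:ℚ)^(i-j) / ((i-j+1 : ℕ):ℚ)) ≤ (p:ℚ)^(-2:ℤ) := by
          rw [nu_pow_div_nat _ _ (by omega)]
          exact zpow_le_zpow_right₀ hp1 (by omega)
        calc padicNorm p _ ≤ (p:ℚ) * 1 * (p:ℚ)^(-2:ℤ) :=
              nu_mul3_le (nu_bernoulli_le j) (padicNorm.of_nat _) hx hp0 (by positivity)
          _ = (p:ℚ)⁻¹ := by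
              have h2 : (p:ℚ)^(-2:ℤ) = ((p:ℚ)^(2:ℕ))⁻¹ := by
                rw [← zpow_natCast, ← zpow_neg]; norm_num
              rw [h2]
              field_simp
  exact hterm

lemma binom_sq_dvd_aux (x y : ℤ) (n : ℕ) :
    y^2 ∣ (x+y)^(n+1) - x^(n+1) - (n+1) * x^n * y := by
  induction n with
  | zero => refine ⟨0, ?_⟩; push_cast; ring
  | succ n ih =>
    obtain ⟨c, hc⟩ := ih
    refine ⟨c * (x + y) + (n+1) * x^n, ?_⟩
    have expand : (x+y)^(n+1+1) - x^(n+1+1) - ((n:ℤ)+1+1) * x^(n+1) * y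
        = (x+y) * ((x+y)^(n+1) - x^(n+1) - ((n:ℤ)+1) * x^n * y) + ((n:ℤ)+1) * x^n * y^2 := by
      ring
    push_cast at hc ⊢
    rw [expand, hc]
    ring

lemma binom_sq_dvd (x y : ℤ) (n : ℕ) (hn : 1 ≤ n) :
    y^2 ∣ (x+y)^n - x^n - n * x^(n-1) * y := by
  obtain ⟨m, rfl⟩ : ∃ m, n = m + 1 := ⟨n - 1, by omega⟩
  simpa using binom_sq_dvd_aux x y m

variable {p : ℕ} [hp : Fact p.Prime]

lemma not_dvd_of_inv {a a' : ℕ} (hinv : (a * a') % p = 1) : ¬ p ∣ a' := by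
  intro hd
  obtain ⟨c, rfl⟩ := hd
  rw [show a * (p * c) = p * (a * c) by ring, Nat.mul_mod_right] at hinv
  exact one_ne_zero hinv.symm

lemma mod_inv_self {a a' b : ℕ} (hinv : (a * a') % p = 1) (hb1 : 1 ≤ b) (hb2 : b ≤ p - 1) :
    (b * a' % p) * a % p = b := by
  have hp2 := hp.out.two_le
  rw [Nat.mod_mul_mod, show b * a' * a = b * (a * a') by ring, Nat.mul_mod, hinv, mul_one]
  simp [Nat.mod_eq_of_lt (show b < p by omega)]

lemma sum_mod_bij {M : Type*} [AddCommMonoid M] {a a' : ℕ} (hinv : (a * a') % p = 1)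
    (f : ℕ → M) :
    ∑ b ∈ Finset.Icc 1 (p-1), f (b * a' % p) = ∑ b ∈ Finset.Icc 1 (p-1), f b := by
  have hp2 := hp.out.two_le
  have hinv' : (a' * a) % p = 1 := by rwa [mul_comm]
  have hna' : ¬ p ∣ a' := not_dvd_of_inv hinv
  have hna : ¬ p ∣ a := not_dvd_of_inv hinv'
  have hmem : ∀ (c : ℕ), ¬ p ∣ c → ∀ b ∈ Finset.Icc 1 (p-1), b * c % p ∈ Finset.Icc 1 (p-1) := by
    intro c hc b hb
    rw [Finset.mem_Icc] at hb ⊢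
    have hmod : b * c % p < p := Nat.mod_lt _ (by omega)
    have hne : b * c % p ≠ 0 := by
      rw [Ne, ← Nat.dvd_iff_mod_eq_zero]
      intro hd
      rcases (Nat.Prime.dvd_mul hp.out).mp hd with h | h
      · exact absurd (Nat.le_of_dvd (by omega) h) (by omega)
      · exact hc h
    omega
  refine Finset.sum_nbij' (fun b => b * a' % p) (fun b => b * a % p)
    (hmem a' hna') (hmem a hna) ?_ ?_ ?_
  · intro b hb
    rw [Finset.mem_Icc] at hb
    exact mod_inv_self hinv hb.1 hb.2
  · intro b hb
    rw [Finset.mem_Icc] at hb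
    exact mod_inv_self hinv' hb.1 hb.2
  · intro b _; rfl

lemma voronoi_int (i : ℕ) (hi : 1 ≤ i) {a a' : ℕ} (hinv : (a * a') % p = 1) :
    (p:ℤ)^2 ∣ (a':ℤ)^i * (∑ b ∈ Finset.Icc 1 (p-1), (b:ℤ)^i)
      - (∑ b ∈ Finset.Icc 1 (p-1), (b:ℤ)^i)
      - i * p * (∑ b ∈ Finset.Icc 1 (p-1), ((b * a' / p : ℕ):ℤ) * ((b * a' % p : ℕ):ℤ)^(i-1)) := by
  have hterm : ∀ b : ℕ, (p:ℤ)^2 ∣ ((b * a' : ℕ):ℤ)^i - ((b * a' % p : ℕ):ℤ)^i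
      - i * p * (((b * a' / p : ℕ):ℤ) * ((b * a' % p : ℕ):ℤ)^(i-1)) := by
    intro b
    have hsplit : ((b * a' : ℕ):ℤ) = ((b * a' % p : ℕ):ℤ) + (p:ℤ) * ((b * a' / p : ℕ):ℤ) := by
      exact_mod_cast (Nat.mod_add_div (b * a') p).symm
    have hd := binom_sq_dvd ((b * a' % p : ℕ):ℤ) ((p:ℤ) * ((b * a' / p : ℕ):ℤ)) i hi
    have hpq : (p:ℤ)^2 ∣ ((p:ℤ) * ((b * a' / p : ℕ):ℤ))^2 := ⟨((b * a' / p : ℕ):ℤ)^2, by ring⟩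
    have := dvd_trans hpq hd
    rw [← hsplit] at this
    obtain ⟨c, hc⟩ := this
    exact ⟨c, by rw [← hc]; ring⟩
  have hsum := Finset.dvd_sum (fun b (_ : b ∈ Finset.Icc 1 (p-1)) => hterm b)
  have hrw : ∑ b ∈ Finset.Icc 1 (p-1), (((b * a' : ℕ):ℤ)^i - ((b * a' % p : ℕ):ℤ)^i
      - i * p * (((b * a' / p : ℕ):ℤ) * ((b * a' % p : ℕ):ℤ)^(i-1)))
      = (a':ℤ)^i * (∑ b ∈ Finset.Icc 1 (p-1), (b:ℤ)^i)
      - (∑ b ∈ Finset.Icc 1 (p-1), (b:ℤ)^i)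
      - i * p * (∑ b ∈ Finset.Icc 1 (p-1), ((b * a' / p : ℕ):ℤ) * ((b * a' % p : ℕ):ℤ)^(i-1)) := by
    rw [Finset.sum_sub_distrib, Finset.sum_sub_distrib]
    congr 1
    · congr 1
      · rw [Finset.mul_sum]
        apply Finset.sum_congr rfl
        intro b _
        push_cast
        ring
      · -- ∑ (b*a' % p)^i = ∑ b^i  via bijection
        exact sum_mod_bij hinv (fun n => ((n:ℤ))^i)
    · rw [Finset.mul_sum]
  rwa [hrw] at hsum

lemma nu_intCast_dvd_le (z : ℤ) (h : (p:ℤ) ∣ z) : padicNorm p (z:ℚ) ≤ (p:ℚ)⁻¹ := by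
  have h' : ((p^1 : ℕ) : ℤ) ∣ z := by rw [pow_one]; exact_mod_cast h
  have := padicNorm.dvd_iff_norm_le (p := p) (n := 1) (z := z) |>.mp h'
  simpa [zpow_neg, zpow_one] using this

lemma nu_intCast_dvd_sq_le (z : ℤ) (h : (p:ℤ)^2 ∣ z) : padicNorm p (z:ℚ) ≤ (p:ℚ)^(-2:ℤ) := by
  have h' : ((p^2 : ℕ) : ℤ) ∣ z := by push_cast; exact_mod_cast h
  have := padicNorm.dvd_iff_norm_le (p := p) (n := 2) (z := z) |>.mp h'
  simpa using this

lemma ratCongr_of_norm (x y : ℚ) (h : padicNorm p (x - y) ≤ (p:ℚ)⁻¹) : ratCongr p 1 x y := by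
  have hpne : (p:ℚ) ≠ 0 := by
    have := hp.out.pos; positivity
  have hp0 : (0:ℚ) ≤ p := by positivity
  refine ⟨(x - y)/p, by field_simp, ?_⟩
  rw [← padicNorm_le_one_iff_den, padicNorm.div, padicNorm.padicNorm_p_of_prime,
    div_eq_mul_inv, inv_inv]
  calc padicNorm p (x - y) * p ≤ (p:ℚ)⁻¹ * p := mul_le_mul_of_nonneg_right h hp0
    _ = 1 := inv_mul_cancel₀ hpne

/-- Voronoi-type congruence with the inverse of `a` (Congruence (5)). -/
theorem voronoi_inverse (p : ℕ) (hp : p.Prime) (hodd : Odd p)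
    (i : ℕ) (hipos : 0 < i) (hcop : Nat.Coprime i p)
    (h0 : ¬ i ≡ 0 [MOD p - 1]) (h1 : ¬ i ≡ 1 [MOD p - 1])
    (a : ℕ) (ha1 : 1 ≤ a) (ha2 : a ≤ p - 1)
    (a' : ℕ) (ha'1 : 1 ≤ a') (ha'2 : a' ≤ p - 1) (hinv : (a * a') % p = 1) :
    ratCongr p 1 ((bernoulli i / i) * (1 / (a : ℚ) ^ i - 1))
      (∑ b ∈ Finset.Icc 1 (p - 1),
        ((b * a' / p : ℕ) : ℚ) * ((b * a' % p : ℕ) : ℚ) ^ (i - 1)) := by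
  haveI hpf : Fact p.Prime := ⟨hp⟩
  have hp2 : 2 ≤ p := hp.two_le
  have h3p : 3 ≤ p := three_le_p hodd
  have hpne : (p:ℚ) ≠ 0 := by positivity
  have hp0 : (0:ℚ) ≤ p := by positivity
  have hine : (i:ℚ) ≠ 0 := by exact_mod_cast hipos.ne'
  have hpi : ¬ p ∣ i := (Nat.Prime.coprime_iff_not_dvd hp).mp hcop.symm
  have hpa : ¬ p ∣ a := fun hd => absurd (Nat.le_of_dvd (by omega) hd) (by omega)
  have hane : (a:ℚ) ≠ 0 := by
    have : (0:ℕ) < a := ha1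
    exact_mod_cast this.ne'
  have h0' : ¬ (p-1) ∣ i := by rwa [Nat.modEq_zero_iff_dvd] at h0
  have h1' : ¬ (p-1) ∣ (i-1) := fun hd => h1 (((Nat.modEq_iff_dvd' hipos).mpr hd).symm)
  -- notation
  set SN : ℕ := ∑ b ∈ Finset.Icc 1 (p-1), b^i with hSN
  set QN : ℕ := ∑ b ∈ Finset.Icc 1 (p-1), (b*a'/p) * ((b*a'%p))^(i-1) with hQN
  have hSQ : (∑ k ∈ Finset.range p, (k:ℚ)^i) = (SN : ℚ) := by
    rw [Finset.range_eq_Ico, Finset.sum_eq_sum_Ico_succ_bot (by omega : 0 < p),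
      Nat.cast_zero, zero_pow hipos.ne', zero_add, show p = p - 1 + 1 by omega,
      Finset.Ico_add_one_right_eq_Icc, hSN]
    push_cast
    rfl
  have hQQ : (∑ b ∈ Finset.Icc 1 (p - 1),
      ((b * a' / p : ℕ) : ℚ) * ((b * a' % p : ℕ) : ℚ) ^ (i - 1)) = (QN : ℚ) := by
    rw [hQN]
    push_cast
    rfl
  have hSZ : ((∑ b ∈ Finset.Icc 1 (p-1), (b:ℤ)^i : ℤ) : ℚ) = (SN:ℚ) := by
    rw [hSN]; push_cast; rfl
  -- the integer congruence
  set ZN : ℤ := (a':ℤ)^i * (∑ b ∈ Finset.Icc 1 (p-1), (b:ℤ)^i)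
      - (∑ b ∈ Finset.Icc 1 (p-1), (b:ℤ)^i)
      - i * p * (∑ b ∈ Finset.Icc 1 (p-1), ((b * a' / p : ℕ):ℤ) * ((b * a' % p : ℕ):ℤ)^(i-1))
    with hZN
  have hvor : (p:ℤ)^2 ∣ ZN := voronoi_int i hipos hinv
  have hZNcast : ((ZN : ℤ) : ℚ) = (a':ℚ)^i * (SN:ℚ) - (SN:ℚ) - (i:ℚ)*(p:ℚ)*(QN:ℚ) := by
    have hSZ2 : (∑ b ∈ Finset.Icc 1 (p-1), (b:ℤ)^i) = ((SN:ℕ):ℤ) := by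
      rw [hSN]; push_cast; rfl
    have hQZ2 : (∑ b ∈ Finset.Icc 1 (p-1), ((b*a'/p:ℕ):ℤ) * ((b*a'%p:ℕ):ℤ)^(i-1))
        = ((QN:ℕ):ℤ) := by
      rw [hQN]; push_cast; rfl
    rw [hZN, hSZ2, hQZ2]
    push_cast
    ring
  -- p divides (a*a')^i - 1
  have hmod : (p:ℤ) ∣ ((a*a')^i : ℕ) - 1 := by
    have h1p : 1 % p = 1 := Nat.mod_eq_of_lt (by omega)
    have hme : (a*a')^i ≡ 1 [MOD p] := by
      calc (a*a')^i ≡ 1^i [MOD p] := Nat.ModEq.pow i (by rwa [Nat.ModEq, h1p])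
        _ = 1 := one_pow i
    have hd := (Nat.modEq_iff_dvd (n := p)).mp hme
    have he : (((a*a')^i : ℕ) : ℤ) - 1 = -((1:ℤ) - (((a*a')^i : ℕ):ℤ)) := by ring
    rw [show ((((a*a')^i : ℕ)):ℤ) - 1 = -((1:ℤ) - (((a*a')^i : ℕ):ℤ)) by ring]
    exact dvd_neg.mpr (by exact_mod_cast hd)
  rw [hQQ]
  apply ratCongr_of_norm
  -- decomposition
  have hdecomp : bernoulli i / i * (1/(a:ℚ)^i - 1) - (QN:ℚ)
      = (bernoulli i / i) * ((1 - (((a*a')^i : ℕ):ℚ)) / ((a^i : ℕ):ℚ))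
      + (((((a'^i : ℕ):ℚ) - 1) / i) * (bernoulli i - (SN:ℚ)/p)
      + ((ZN:ℤ):ℚ) / ((i : ℚ) * p)) := by
    rw [hZNcast]
    push_cast
    field_simp
    ring
  rw [hdecomp]
  have hmax : ∀ x y z : ℚ, padicNorm p x ≤ (p:ℚ)⁻¹ → padicNorm p y ≤ (p:ℚ)⁻¹ →
      padicNorm p z ≤ (p:ℚ)⁻¹ → padicNorm p (x + (y + z)) ≤ (p:ℚ)⁻¹ := by
    intro x y z hx hy hz
    refine le_trans padicNorm.nonarchimedean (max_le hx ?_)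
    exact le_trans padicNorm.nonarchimedean (max_le hy hz)
  apply hmax
  · -- T1
    have hBi : padicNorm p (bernoulli i / i) ≤ 1 := by
      rw [padicNorm.div, show ((i:ℚ)) = ((i:ℕ):ℚ) by norm_cast,
        (padicNorm.nat_eq_one_iff i).mpr hpi, div_one]
      exact nu_bernoulli_le_one hodd i h0'
    have hnum : padicNorm p (1 - (((a*a')^i : ℕ):ℚ)) ≤ (p:ℚ)⁻¹ := by
      have : (1 - (((a*a')^i : ℕ):ℚ)) = ((-(((a*a')^i : ℕ) - 1 : ℤ) : ℤ) : ℚ) := by push_cast; ring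
      rw [this]
      exact nu_intCast_dvd_le _ (dvd_neg.mpr hmod)
    have hden : padicNorm p ((a^i : ℕ):ℚ) = 1 :=
      (padicNorm.nat_eq_one_iff _).mpr (fun hd => hpa (hp.dvd_of_dvd_pow hd))
    have hX : padicNorm p ((1 - (((a*a')^i : ℕ):ℚ)) / ((a^i : ℕ):ℚ)) ≤ (p:ℚ)⁻¹ := by
      rw [padicNorm.div, hden, div_one]; exact hnum
    calc padicNorm p _ = padicNorm p (bernoulli i / i)
          * padicNorm p ((1 - (((a*a')^i : ℕ):ℚ)) / ((a^i : ℕ):ℚ)) := padicNorm.mul _ _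
      _ ≤ 1 * (p:ℚ)⁻¹ := mul_le_mul hBi hX (padicNorm.nonneg _) zero_le_one
      _ = (p:ℚ)⁻¹ := one_mul _
  · -- T2
    have hY : padicNorm p ((((a'^i : ℕ):ℚ) - 1) / i) ≤ 1 := by
      rw [padicNorm.div, show ((i:ℚ)) = ((i:ℕ):ℚ) by norm_cast,
        (padicNorm.nat_eq_one_iff i).mpr hpi, div_one]
      have : (((a'^i : ℕ):ℚ) - 1) = ((((a'^i : ℕ) : ℤ) - 1 : ℤ) : ℚ) := by push_cast; ring
      rw [this]
      exact padicNorm.of_int _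
    have hZ : padicNorm p (bernoulli i - (SN:ℚ)/p) ≤ (p:ℚ)⁻¹ := by
      rw [show bernoulli i - (SN:ℚ)/p = -((SN:ℚ)/p - bernoulli i) by ring, padicNorm.neg,
        ← hSQ]
      exact nu_L3 hodd i hipos h0' h1'
    calc padicNorm p _ = padicNorm p ((((a'^i : ℕ):ℚ) - 1) / i)
          * padicNorm p (bernoulli i - (SN:ℚ)/p) := padicNorm.mul _ _
      _ ≤ 1 * (p:ℚ)⁻¹ := mul_le_mul hY hZ (padicNorm.nonneg _) zero_le_one
      _ = (p:ℚ)⁻¹ := one_mul _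
  · -- T3
    have hnum : padicNorm p ((ZN:ℤ):ℚ) ≤ (p:ℚ)^(-2:ℤ) := nu_intCast_dvd_sq_le ZN hvor
    have hden : padicNorm p ((i:ℚ) * p) = (p:ℚ)⁻¹ := by
      rw [padicNorm.mul, show ((i:ℚ)) = ((i:ℕ):ℚ) by norm_cast,
        (padicNorm.nat_eq_one_iff i).mpr hpi, padicNorm.padicNorm_p_of_prime, one_mul]
    rw [padicNorm.div, hden, div_eq_mul_inv, inv_inv]
    calc padicNorm p ((ZN:ℤ):ℚ) * p ≤ (p:ℚ)^(-2:ℤ) * p :=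
          mul_le_mul_of_nonneg_right hnum hp0
      _ = (p:ℚ)⁻¹ := by
          have h2 : (p:ℚ)^(-2:ℤ) = ((p:ℚ)^(2:ℕ))⁻¹ := by
            rw [← zpow_natCast, ← zpow_neg]; norm_num
          rw [h2]
          field_simp
end

section
/- Let p be a prime with p > 5 and let i be an integer with 2 ≤ i ≤ p−3. Then the sum of reciprocals of (i−1)-th powers of the odd integers below p, namely T = 1/1^{i−1} + 1/3^{i−1} + 1/5^{i−1} + ⋯ + 1/(p−2)^{i−1}, satisfies: T ≡ q_2 (mod p) if i = 2; T ≡ (1/2^{i−2} − 1)·B_{p+1−i}/(p+1−i) (mod p) if i is even with 4 ≤ i ≤ p−3; and T ≡ 0 (mod p) if i is odd with 3 ≤ i ≤ p−4. -/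
open Finset

variable {p : ℕ} [hp : Fact p.Prime]



/-- p-integral rational: norm ≤ 1 in ℚ_[p]. -/
lemma norm_le_one_of_den {q : ℚ} (h : ¬ p ∣ q.den) : ‖(q : ℚ_[p])‖ ≤ 1 :=
  Padic.norm_rat_le_one h

lemma den_not_dvd_of_norm_le_one {q : ℚ} (h : ‖(q : ℚ_[p])‖ ≤ 1) : ¬ p ∣ q.den := by
  intro hd
  have hq0 : q ≠ 0 := by rintro rfl; simp at hd; exact hp.out.ne_one hd
  have hnum : ¬ ((p : ℤ) ∣ q.num) := by
    intro hn
    have := q.reduced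
    have hpn : p ∣ q.num.natAbs := Int.natCast_dvd_natCast.mp (by simpa using (Int.dvd_natAbs.mpr hn))
    have := Nat.Coprime.eq_one_of_dvd (this.coprime_dvd_left hpn) hd
    exact hp.out.ne_one this
  -- q = num / den
  have hden0 : (q.den : ℚ) ≠ 0 := by exact_mod_cast q.den_ne_zero
  have hqe : (q.num : ℚ) = q * (q.den : ℚ) := by
    rw [Rat.mul_comm]; exact_mod_cast (Rat.den_mul_eq_num q).symm
  have hnorm : ‖((q.num : ℚ) : ℚ_[p])‖ < 1 := by
    rw [hqe]
    push_cast
    rw [norm_mul]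
    have hdlt : ‖((q.den : ℤ) : ℚ_[p])‖ < 1 :=
      (Padic.norm_intCast_lt_one_iff (k := _)).mpr (Int.natCast_dvd_natCast.mpr hd)
    calc ‖(q : ℚ_[p])‖ * ‖((q.den : ℕ) : ℚ_[p])‖ ≤ 1 * ‖((q.den : ℕ) : ℚ_[p])‖ := by
          apply mul_le_mul_of_nonneg_right h (norm_nonneg _)
      _ < 1 := by rw [one_mul]; exact_mod_cast hdlt
  rw [show ((q.num : ℚ) : ℚ_[p]) = ((q.num : ℤ) : ℚ_[p]) by push_cast; ring] at hnorm
  exact hnum ((Padic.norm_intCast_lt_one_iff (k := _)).mp hnorm)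

lemma ratCongr_iff {x y : ℚ} : ratCongr p 1 x y ↔ ‖((x : ℚ_[p]) - y)‖ < 1 := by
  constructor
  · rintro ⟨t, ht, hden⟩
    have : ((x : ℚ_[p]) - y) = ((x - y : ℚ) : ℚ_[p]) := by push_cast; ring
    rw [this, ht]
    push_cast
    rw [norm_mul, pow_one]
    have h1 : ‖(((p:ℚ) : ℚ) : ℚ_[p])‖ = (p : ℝ)⁻¹ := by
      rw [show (((p:ℚ):ℚ) : ℚ_[p]) = (p : ℚ_[p]) by push_cast; ring]; exact Padic.norm_p
    rw [show ((p:ℚ_[p])) = (((p:ℚ):ℚ):ℚ_[p]) by push_cast; ring, h1]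
    have h2 : ‖((t : ℚ) : ℚ_[p])‖ ≤ 1 := norm_le_one_of_den hden
    have hp1 : (1 : ℝ) < p := by exact_mod_cast hp.out.one_lt
    calc (p : ℝ)⁻¹ * ‖((t:ℚ) : ℚ_[p])‖ ≤ (p:ℝ)⁻¹ * 1 := by
          apply mul_le_mul_of_nonneg_left h2 (by positivity)
      _ < 1 := by rw [mul_one]; exact inv_lt_one_of_one_lt₀ hp1
  · intro h
    refine ⟨(x - y) / p, ?_, ?_⟩
    · have hpQ : (p : ℚ) ≠ 0 := by exact_mod_cast hp.out.ne_zero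
      field_simp
    · apply den_not_dvd_of_norm_le_one
      have hle : ‖((x - y : ℚ) : ℚ_[p])‖ ≤ (p : ℝ) ^ (-1 : ℤ) := by
        have := (Padic.norm_lt_pow_iff_norm_le_pow_sub_one ((x - y : ℚ) : ℚ_[p]) 0).mp
          (by rw [zpow_zero]; push_cast; exact h)
        simpa using this
      have : (((x - y) / p : ℚ) : ℚ_[p]) = ((x - y : ℚ) : ℚ_[p]) / (p : ℚ_[p]) := by push_cast; ring
      rw [this, norm_div, Padic.norm_p]
      rw [div_le_one_iff]
      left
      constructor
      · have hp0 : (0:ℝ) < p := by exact_mod_cast hp.out.pos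
        positivity
      · calc ‖((x - y : ℚ) : ℚ_[p])‖ ≤ (p:ℝ)^(-1:ℤ) := hle
          _ = (p:ℝ)⁻¹ := by simp



-- sum of elements of norm < 1 has norm < 1
lemma norm_sum_lt_one {α : Type*} (s : Finset α) (f : α → ℚ_[p])
    (h : ∀ a ∈ s, ‖f a‖ < 1) : ‖∑ a ∈ s, f a‖ < 1 := by
  induction s using Finset.cons_induction with
  | empty => simp
  | cons a s ha ih =>
    rw [Finset.sum_cons]
    calc ‖f a + ∑ x ∈ s, f x‖ ≤ max ‖f a‖ ‖∑ x ∈ s, f x‖ := Padic.nonarchimedean _ _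
      _ < 1 := max_lt (h a (Finset.mem_cons_self a s))
        (ih fun b hb => h b (Finset.mem_cons_of_mem hb))

lemma norm_sum_le_one {α : Type*} (s : Finset α) (f : α → ℚ_[p])
    (h : ∀ a ∈ s, ‖f a‖ ≤ 1) : ‖∑ a ∈ s, f a‖ ≤ 1 := by
  induction s using Finset.cons_induction with
  | empty => simp
  | cons a s ha ih =>
    rw [Finset.sum_cons]
    calc ‖f a + ∑ x ∈ s, f x‖ ≤ max ‖f a‖ ‖∑ x ∈ s, f x‖ := Padic.nonarchimedean _ _
      _ ≤ 1 := max_le (h a (Finset.mem_cons_self a s))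
        (ih fun b hb => h b (Finset.mem_cons_of_mem hb))

lemma norm_add_lt_one {a b : ℚ_[p]} (ha : ‖a‖ < 1) (hb : ‖b‖ < 1) : ‖a + b‖ < 1 :=
  lt_of_le_of_lt (Padic.nonarchimedean _ _) (max_lt ha hb)

lemma norm_sub_lt_one {a b : ℚ_[p]} (ha : ‖a‖ < 1) (hb : ‖b‖ < 1) : ‖a - b‖ < 1 := by
  rw [sub_eq_add_neg]; exact norm_add_lt_one ha (by rwa [norm_neg])

lemma norm_mul_lt_one_of_lt_of_le {a b : ℚ_[p]} (ha : ‖a‖ < 1) (hb : ‖b‖ ≤ 1) : ‖a * b‖ < 1 := by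
  rw [norm_mul]
  rcases eq_or_lt_of_le (norm_nonneg b) with h | h
  · rw [← h, mul_zero]; norm_num
  · calc ‖a‖ * ‖b‖ ≤ ‖a‖ * 1 := mul_le_mul_of_nonneg_left hb (norm_nonneg a)
      _ < 1 := by rwa [mul_one]

lemma norm_mul_le_one {a b : ℚ_[p]} (ha : ‖a‖ ≤ 1) (hb : ‖b‖ ≤ 1) : ‖a * b‖ ≤ 1 := by
  rw [norm_mul]
  calc ‖a‖ * ‖b‖ ≤ 1 * 1 := mul_le_mul ha hb (norm_nonneg b) zero_le_one
    _ = 1 := one_mul 1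

-- transitivity tools
lemma sm_trans {a b c : ℚ_[p]} (h1 : ‖a - b‖ < 1) (h2 : ‖b - c‖ < 1) : ‖a - c‖ < 1 := by
  have : a - c = (a - b) + (b - c) := by ring
  rw [this]; exact norm_add_lt_one h1 h2

lemma norm_natCast_le_one (n : ℕ) : ‖(n : ℚ_[p])‖ ≤ 1 := by
  have := Padic.norm_int_le_one (p := p) (n : ℤ)
  simpa using this

lemma norm_natCast_lt_one_iff (n : ℕ) : ‖(n : ℚ_[p])‖ < 1 ↔ p ∣ n := by
  have := Padic.norm_intCast_lt_one_iff (p := p) (k := (n : ℤ))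
  rw [Int.natCast_dvd_natCast] at this
  simpa using this

lemma norm_eq_one_of_not_dvd {n : ℕ} (h : ¬ p ∣ n) : ‖(n : ℚ_[p])‖ = 1 := by
  rcases lt_or_eq_of_le (norm_natCast_le_one (p := p) n) with hlt | he
  · exact absurd ((norm_natCast_lt_one_iff n).mp hlt) h
  · exact he

-- p * (p-integral) is small
lemma norm_p_mul_lt_one {a : ℚ_[p]} (ha : ‖a‖ ≤ 1) : ‖(p : ℚ_[p]) * a‖ < 1 := by
  apply norm_mul_lt_one_of_lt_of_le _ ha
  rw [Padic.norm_p]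
  have : (1:ℝ) < p := by exact_mod_cast hp.out.one_lt
  exact inv_lt_one_of_one_lt₀ this

-- Fermat: for a coprime to p, ‖a^(p-1) - 1‖ < 1
lemma fermat_little_norm {a : ℕ} (ha : ¬ p ∣ a) : ‖((a : ℚ_[p]) ^ (p - 1) - 1)‖ < 1 := by
  have h1 : ((a : ZMod p)) ≠ 0 := by
    simpa [Ne, ZMod.natCast_eq_zero_iff] using ha
  have h2 : (a : ZMod p) ^ (p - 1) = 1 := ZMod.pow_card_sub_one_eq_one h1
  have h3 : (p : ℤ) ∣ ((a : ℤ) ^ (p - 1) - 1) := by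
    have : (((a : ℤ) ^ (p-1) - 1 : ℤ) : ZMod p) = 0 := by push_cast [h2]; ring
    exact_mod_cast (ZMod.intCast_zmod_eq_zero_iff_dvd _ p).mp this
  have := (Padic.norm_intCast_lt_one_iff (p := p) (k := (a:ℤ)^(p-1) - 1)).mpr h3
  have hc : (((a:ℤ)^(p-1) - 1 : ℤ) : ℚ_[p]) = (a : ℚ_[p])^(p-1) - 1 := by push_cast; ring
  rwa [hc] at this

-- inverse of unit has norm 1 and key reduction: ‖1/a^(i-1) - a^(p-i)‖ < 1
lemma term_reduction {a : ℕ} (ha : ¬ p ∣ a) {i : ℕ} (hi : 2 ≤ i) (hip : i ≤ p) :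
    ‖(1 / ((a : ℚ_[p]) ^ (i-1)) - (a : ℚ_[p]) ^ (p - i))‖ < 1 := by
  have hna : ‖(a : ℚ_[p])‖ = 1 := norm_eq_one_of_not_dvd ha
  have ha0 : (a : ℚ_[p]) ≠ 0 := by
    intro h; rw [h, norm_zero] at hna; norm_num at hna
  have hpw : (a : ℚ_[p]) ^ (i - 1) ≠ 0 := pow_ne_zero _ ha0
  have key : (1 : ℚ_[p]) / (a : ℚ_[p])^(i-1) - (a : ℚ_[p])^(p-i)
      = (1 - (a : ℚ_[p])^(p-1)) * (1 / (a : ℚ_[p])^(i-1)) := by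
    rw [sub_mul, one_mul]
    congr 1
    rw [mul_one_div, eq_div_iff hpw, ← pow_add]
    congr 1
    omega
  rw [key]
  apply norm_mul_lt_one_of_lt_of_le
  · rw [show (1 : ℚ_[p]) - (a:ℚ_[p])^(p-1) = -((a:ℚ_[p])^(p-1) - 1) by ring, norm_neg]
    exact fermat_little_norm ha
  · rw [norm_div, norm_one, norm_pow, hna, one_pow, div_one]



lemma bernoulli_odd_zero {n : ℕ} (h : Odd n) (h1 : 1 < n) : bernoulli n = 0 := by
  rw [bernoulli_eq_bernoulli'_of_ne_one (by omega)]
  exact bernoulli'_eq_zero_of_odd h h1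

lemma sum_range_zmod (m : ℕ) :
    ∑ k ∈ range p, ((k : ZMod p)) ^ m = ∑ x : ZMod p, x ^ m := by
  refine Finset.sum_nbij' (fun k => (k : ZMod p)) (fun x => x.val) ?_ ?_ ?_ ?_ ?_
  · intro a _; exact Finset.mem_univ _
  · intro x _
    simp only [Finset.mem_range]
    exact ZMod.val_lt x
  · intro a ha
    simp only [Finset.mem_range] at ha
    exact ZMod.val_cast_of_lt ha
  · intro x _
    exact ZMod.natCast_val x |>.trans (ZMod.cast_id _ _)
  · intro a _; rfl

-- divisibility facts for power sums
lemma snat_dvd {m : ℕ} (hm : m < p - 1) : p ∣ ∑ k ∈ range p, k ^ m := by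
  have h : ((∑ k ∈ range p, k ^ m : ℕ) : ZMod p) = 0 := by
    push_cast
    rw [sum_range_zmod]
    exact FiniteField.sum_pow_lt_card_sub_one (K := ZMod p) m (by rwa [ZMod.card])
  exact (ZMod.natCast_eq_zero_iff _ _).mp h

lemma snat_top : ((∑ k ∈ range p, k ^ (p - 1) : ℕ) : ZMod p) = -1 := by
  push_cast
  rw [sum_range_zmod]
  have h2 : ∑ x : ZMod p, x ^ (p-1) = ∑ x : ZMod p, if x = 0 then 0 else 1 := by
    apply Finset.sum_congr rfl
    intro x _
    by_cases hx : x = 0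
    · subst hx
      simp [zero_pow, Nat.sub_ne_zero_of_lt hp.out.one_lt]
    · simp [hx, ZMod.pow_card_sub_one_eq_one hx]
  have h3 : ∀ x : ZMod p, (if x = 0 then (0:ZMod p) else 1) = 1 - (if x = 0 then 1 else 0) := by
    intro x; split <;> simp
  rw [h2, Finset.sum_congr rfl (fun x _ => h3 x), Finset.sum_sub_distrib, Finset.sum_const,
    Finset.sum_ite_eq' Finset.univ (0:ZMod p) (fun _ => (1:ZMod p))]
  simp only [Finset.mem_univ, if_true, Finset.card_univ, ZMod.card]
  rw [nsmul_eq_mul, mul_one, ZMod.natCast_self]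
  ring

lemma norm_le_inv_of_dvd {n : ℕ} (h : p ∣ n) : ‖(n : ℚ_[p])‖ ≤ (p:ℝ)⁻¹ := by
  obtain ⟨c, rfl⟩ := h
  push_cast
  rw [norm_mul, Padic.norm_p]
  calc (p:ℝ)⁻¹ * ‖(c : ℚ_[p])‖ ≤ (p:ℝ)⁻¹ * 1 := by
        apply mul_le_mul_of_nonneg_left _ (by positivity)
        exact_mod_cast Padic.norm_int_le_one (p := p) (c : ℤ)
    _ = (p:ℝ)⁻¹ := mul_one _

lemma faulhaber_padic (n m : ℕ) :
    (∑ k ∈ range n, (k:ℚ_[p])^m) =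
      ∑ j ∈ range (m+1), ((bernoulli j : ℚ) : ℚ_[p]) * (((m+1).choose j : ℕ) : ℚ_[p])
        * (n:ℚ_[p])^(m+1-j) / ((m+1 : ℕ) : ℚ_[p]) := by
  have h := sum_range_pow n m
  have := congrArg (fun q : ℚ => (q : ℚ_[p])) h
  push_cast at this ⊢
  convert this using 2

lemma pB_eq (m : ℕ) :
    (p:ℚ_[p]) * ((bernoulli m : ℚ) : ℚ_[p]) =
      ((∑ k ∈ range p, k ^ m : ℕ) : ℚ_[p]) -
      ∑ j ∈ range m, ((bernoulli j : ℚ):ℚ_[p]) * (((m+1).choose j : ℕ) : ℚ_[p])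
        * (p:ℚ_[p])^(m+1-j) / ((m+1 : ℕ) : ℚ_[p]) := by
  have hF := faulhaber_padic (p := p) p m
  rw [Finset.sum_range_succ] at hF
  have hm1 : ((m+1 : ℕ) : ℚ_[p]) ≠ 0 := Nat.cast_ne_zero.mpr (by omega)
  have hlast : ((bernoulli m : ℚ):ℚ_[p]) * (((m+1).choose m : ℕ) : ℚ_[p])
      * (p:ℚ_[p])^(m+1-m) / ((m+1:ℕ) : ℚ_[p]) = (p:ℚ_[p]) * ((bernoulli m : ℚ):ℚ_[p]) := by
    rw [Nat.choose_succ_self_right m, show m+1-m = 1 by omega, pow_one]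
    push_cast at hm1 ⊢
    field_simp
  rw [hlast] at hF
  have hcast : ((∑ k ∈ range p, k ^ m : ℕ) : ℚ_[p]) = ∑ k ∈ range p, (k:ℚ_[p])^m := by
    push_cast; rfl
  rw [hcast, hF]
  ring

lemma term_bound {j : ℕ} (hj : ‖(p:ℚ_[p]) * ((bernoulli j : ℚ):ℚ_[p])‖ ≤ 1) {e : ℕ} (he : 1 ≤ e)
    (c d : ℕ) (hd : ¬ p ∣ d) :
    ‖((bernoulli j : ℚ):ℚ_[p]) * (c : ℚ_[p]) * (p:ℚ_[p])^e / (d : ℚ_[p])‖ ≤ ((p:ℝ)⁻¹)^(e-1) := by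
  have hre : ((bernoulli j : ℚ):ℚ_[p]) * (c : ℚ_[p]) * (p:ℚ_[p])^e / (d : ℚ_[p])
      = ((p:ℚ_[p]) * ((bernoulli j : ℚ):ℚ_[p])) * (c : ℚ_[p]) * (p:ℚ_[p])^(e-1) / (d : ℚ_[p]) := by
    have h1 : (p:ℚ_[p])^e = (p:ℚ_[p]) * (p:ℚ_[p])^(e-1) := by
      rw [← pow_succ']; congr 1; omega
    rw [h1]; ring
  rw [hre, norm_div, norm_mul, norm_mul, norm_pow, Padic.norm_p]
  have hdn : ‖(d : ℚ_[p])‖ = 1 := by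
    rcases lt_or_eq_of_le (show ‖(d : ℚ_[p])‖ ≤ 1 by
      exact_mod_cast Padic.norm_int_le_one (p:=p) (d : ℤ)) with hlt | he'
    · exfalso
      apply hd
      have := (Padic.norm_intCast_lt_one_iff (p:=p) (k := (d:ℤ))).mp (by exact_mod_cast hlt)
      exact_mod_cast this
    · exact he'
  rw [hdn, div_one]
  have hc : ‖(c : ℚ_[p])‖ ≤ 1 := by exact_mod_cast Padic.norm_int_le_one (p:=p) (c : ℤ)
  calc ‖(p:ℚ_[p]) * ((bernoulli j : ℚ):ℚ_[p])‖ * ‖(c:ℚ_[p])‖ * ((p:ℝ)⁻¹)^(e-1)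
      ≤ 1 * 1 * ((p:ℝ)⁻¹)^(e-1) := by
        apply mul_le_mul (mul_le_mul hj hc (norm_nonneg _) zero_le_one) le_rfl (by positivity)
        norm_num
    _ = ((p:ℝ)⁻¹)^(e-1) := by ring

lemma vsc_weak : ∀ m, m ≤ p - 2 → ‖(p:ℚ_[p]) * ((bernoulli m : ℚ):ℚ_[p])‖ ≤ 1 := by
  intro m
  induction m using Nat.strong_induction_on with
  | _ m ih =>
    intro hm
    rw [pB_eq m]
    have h1 : ‖((∑ k ∈ range p, k ^ m : ℕ) : ℚ_[p])‖ ≤ 1 := by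
      exact_mod_cast Padic.norm_int_le_one (p:=p) ((∑ k ∈ range p, k ^ m : ℕ) : ℤ)
    have h2 : ‖∑ j ∈ range m, ((bernoulli j : ℚ):ℚ_[p]) * (((m+1).choose j : ℕ) : ℚ_[p])
        * (p:ℚ_[p])^(m+1-j) / ((m+1 : ℕ) : ℚ_[p])‖ ≤ 1 := by
      apply norm_sum_le_one
      intro j hj
      rw [Finset.mem_range] at hj
      have hb := term_bound (p := p) (ih j hj (by omega)) (show 1 ≤ m+1-j by omega)
        ((m+1).choose j) (m+1) (by
          intro hdvd
          have := Nat.le_of_dvd (by omega) hdvd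
          have hplt : m + 1 < p := by
            have := hp.out.two_le; omega
          omega)
      calc ‖((bernoulli j : ℚ):ℚ_[p]) * (((m+1).choose j : ℕ) : ℚ_[p])
          * (p:ℚ_[p])^(m+1-j) / ((m+1 : ℕ) : ℚ_[p])‖ ≤ ((p:ℝ)⁻¹)^(m+1-j-1) := hb
        _ ≤ 1 := by
          apply pow_le_one₀ (by positivity)
          have : (1:ℝ) ≤ p := by exact_mod_cast hp.out.one_le
          exact inv_le_one_of_one_le₀ this
    calc ‖((∑ k ∈ range p, k ^ m : ℕ) : ℚ_[p]) - _‖ ≤ max ‖((∑ k ∈ range p, k ^ m : ℕ) : ℚ_[p])‖ ‖_‖ := by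
          rw [sub_eq_add_neg]
          apply le_trans (Padic.nonarchimedean _ _)
          rw [norm_neg]
      _ ≤ 1 := max_le h1 h2

lemma padic_norm_sum_le_of_le {α : Type*} (s : Finset α) (f : α → ℚ_[p]) {C : ℝ} (hC : 0 ≤ C)
    (h : ∀ a ∈ s, ‖f a‖ ≤ C) : ‖∑ a ∈ s, f a‖ ≤ C := by
  induction s using Finset.cons_induction with
  | empty => simpa using hC
  | cons a s ha ih =>
    rw [Finset.sum_cons]
    calc ‖f a + ∑ x ∈ s, f x‖ ≤ max ‖f a‖ ‖∑ x ∈ s, f x‖ := Padic.nonarchimedean _ _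
      _ ≤ C := max_le (h a (Finset.mem_cons_self a s))
        (ih fun b hb => h b (Finset.mem_cons_of_mem hb))


lemma norm_bernoulli_le_one (hp5 : 5 < p) : ∀ m, m ≤ p - 2 → ‖((bernoulli m : ℚ):ℚ_[p])‖ ≤ 1 := by
  intro m hm
  rcases Nat.eq_zero_or_pos m with rfl | hm0
  · simp
  rcases eq_or_lt_of_le hm with he | hlt
  · -- m = p - 2 is odd, bernoulli = 0
    have hodd : Odd m := by
      rw [he]
      have : Odd p := hp.out.odd_of_ne_two (by omega)
      obtain ⟨t, ht⟩ := this
      exact ⟨t - 1, by omega⟩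
    rw [bernoulli_odd_zero hodd (by omega)]
    simp
  -- now m ≤ p - 3, 1 ≤ m
  have key : ‖(p:ℚ_[p]) * ((bernoulli m : ℚ):ℚ_[p])‖ ≤ (p:ℝ)⁻¹ := by
    rw [pB_eq m]
    have h1 : ‖((∑ k ∈ range p, k ^ m : ℕ) : ℚ_[p])‖ ≤ (p:ℝ)⁻¹ :=
      norm_le_inv_of_dvd (snat_dvd (by omega))
    have h2 : ‖∑ j ∈ range m, ((bernoulli j : ℚ):ℚ_[p]) * (((m+1).choose j : ℕ) : ℚ_[p])
        * (p:ℚ_[p])^(m+1-j) / ((m+1 : ℕ) : ℚ_[p])‖ ≤ (p:ℝ)⁻¹ := by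
      apply padic_norm_sum_le_of_le _ _ (by positivity)
      intro j hj
      rw [Finset.mem_range] at hj
      have hb := term_bound (p := p) (vsc_weak j (by omega)) (show 1 ≤ m+1-j by omega)
        ((m+1).choose j) (m+1) (by
          intro hdvd
          have := Nat.le_of_dvd (by omega) hdvd
          omega)
      apply le_trans hb
      have h1p : (1:ℝ) ≤ (p:ℝ) := by exact_mod_cast hp.out.one_le
      calc ((p:ℝ)⁻¹)^(m+1-j-1) ≤ ((p:ℝ)⁻¹)^1 := by
            apply pow_le_pow_of_le_one (by positivity) (inv_le_one_of_one_le₀ h1p) (by omega)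
        _ = (p:ℝ)⁻¹ := pow_one _
    calc ‖((∑ k ∈ range p, k ^ m : ℕ) : ℚ_[p]) - _‖
        ≤ max ‖((∑ k ∈ range p, k ^ m : ℕ) : ℚ_[p])‖ ‖_‖ := by
          rw [sub_eq_add_neg]
          apply le_trans (Padic.nonarchimedean _ _)
          rw [norm_neg]
      _ ≤ (p:ℝ)⁻¹ := max_le h1 h2
  -- divide by ‖p‖ = p⁻¹
  rw [norm_mul, Padic.norm_p] at key
  have hp0 : (0:ℝ) < (p:ℝ)⁻¹ := by
    have : (0:ℝ) < p := by exact_mod_cast hp.out.pos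
    positivity
  calc ‖((bernoulli m : ℚ):ℚ_[p])‖ = ((p:ℝ)⁻¹ * ‖((bernoulli m : ℚ):ℚ_[p])‖) / (p:ℝ)⁻¹ := by
        field_simp
    _ ≤ (p:ℝ)⁻¹ / (p:ℝ)⁻¹ := by exact div_le_div_of_nonneg_right key hp0.le
    _ = 1 := by field_simp

lemma vsc_top (hp5 : 5 < p) : ‖(p:ℚ_[p]) * ((bernoulli (p-1) : ℚ):ℚ_[p]) + 1‖ ≤ (p:ℝ)⁻¹ := by
  have hm1 : p - 1 + 1 = p := by have := hp.out.two_le; omega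
  have heq := pB_eq (p := p) (p-1)
  rw [hm1] at heq
  have hsnat : ‖((∑ k ∈ range p, k ^ (p-1) : ℕ) : ℚ_[p]) + 1‖ ≤ (p:ℝ)⁻¹ := by
    have hdvd : p ∣ (∑ k ∈ range p, k ^ (p-1)) + 1 := by
      have := snat_top (p := p)
      have h0 : (((∑ k ∈ range p, k ^ (p-1)) + 1 : ℕ) : ZMod p) = 0 := by
        push_cast [this]; ring
      exact (ZMod.natCast_eq_zero_iff _ _).mp h0
    have := norm_le_inv_of_dvd (p := p) hdvd
    rwa [Nat.cast_add, Nat.cast_one] at this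
  have hsum : ‖∑ j ∈ range (p-1), ((bernoulli j : ℚ):ℚ_[p]) * ((p.choose j : ℕ) : ℚ_[p])
      * (p:ℚ_[p])^(p-j) / ((p : ℕ) : ℚ_[p])‖ ≤ (p:ℝ)⁻¹ := by
    apply padic_norm_sum_le_of_le _ _ (by positivity)
    intro j hj
    rw [Finset.mem_range] at hj
    by_cases hje : j = p - 2
    · -- bernoulli (p-2) = 0
      have hodd : Odd j := by
        rw [hje]
        have : Odd p := hp.out.odd_of_ne_two (by omega)
        obtain ⟨t, ht⟩ := this
        exact ⟨t - 1, by omega⟩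
      rw [bernoulli_odd_zero hodd (by omega)]
      simp only [Rat.cast_zero, zero_mul, zero_div, norm_zero]
      positivity
    · -- j ≤ p - 3 : rewrite term with p^(p-j)/p = p^(p-j-1)
      have hterm : ((bernoulli j : ℚ):ℚ_[p]) * ((p.choose j : ℕ) : ℚ_[p])
          * (p:ℚ_[p])^(p-j) / ((p : ℕ) : ℚ_[p])
          = ((bernoulli j : ℚ):ℚ_[p]) * ((p.choose j : ℕ) : ℚ_[p])
          * (p:ℚ_[p])^(p-j-1) / ((1 : ℕ) : ℚ_[p]) := by
        have hppow : (p:ℚ_[p])^(p-j) = (p:ℚ_[p])^(p-j-1) * (p:ℚ_[p]) := by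
          rw [← pow_succ]; congr 1; omega
        have hpne : (p:ℚ_[p]) ≠ 0 := Nat.cast_ne_zero.mpr hp.out.ne_zero
        rw [hppow, Nat.cast_one, div_one]
        field_simp
      rw [hterm]
      have hb := term_bound (p := p) (vsc_weak j (by omega)) (show 1 ≤ p-j-1 by omega)
        (p.choose j) 1 (by simpa using hp.out.ne_one)
      apply le_trans hb
      have h1p : (1:ℝ) ≤ (p:ℝ) := by exact_mod_cast hp.out.one_le
      calc ((p:ℝ)⁻¹)^(p-j-1-1) ≤ ((p:ℝ)⁻¹)^1 := by
            apply pow_le_pow_of_le_one (by positivity) (inv_le_one_of_one_le₀ h1p) (by omega)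
        _ = (p:ℝ)⁻¹ := pow_one _
  have hre : (p:ℚ_[p]) * ((bernoulli (p-1) : ℚ):ℚ_[p]) + 1
      = (((∑ k ∈ range p, k ^ (p-1) : ℕ) : ℚ_[p]) + 1)
      - ∑ j ∈ range (p-1), ((bernoulli j : ℚ):ℚ_[p]) * ((p.choose j : ℕ) : ℚ_[p])
      * (p:ℚ_[p])^(p-j) / ((p : ℕ) : ℚ_[p]) := by
    rw [heq]; ring
  rw [hre]
  calc ‖_ - _‖ ≤ max ‖(((∑ k ∈ range p, k ^ (p-1) : ℕ) : ℚ_[p]) + 1)‖ ‖_‖ := by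
        rw [sub_eq_add_neg]
        apply le_trans (Padic.nonarchimedean _ _)
        rw [norm_neg]
    _ ≤ (p:ℝ)⁻¹ := max_le hsnat hsum

section Half
open PowerSeries Nat


lemma rescale_two_X : rescale (2:ℚ) (X : ℚ⟦X⟧) = PowerSeries.C 2 * X := by
  ext n
  rw [coeff_rescale, coeff_C_mul, coeff_X]
  rcases n with _ | n
  · norm_num
  · rcases n with _ | n <;> simp

lemma exp_sq : exp ℚ * exp ℚ = rescale (2:ℚ) (exp ℚ) := by
  have h := PowerSeries.exp_mul_exp_eq_exp_add (1:ℚ) 1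
  norm_num at h
  exact h

lemma half_gf : rescale (2:ℚ) (bernoulliPowerSeries ℚ) * exp ℚ + rescale (2:ℚ) (bernoulliPowerSeries ℚ)
    = PowerSeries.C 2 * bernoulliPowerSeries ℚ := by
  set B := bernoulliPowerSeries ℚ with hB
  set G := rescale (2:ℚ) B with hG
  have hexp1 : (exp ℚ - 1) ≠ 0 := by
    intro h
    have h1 := congrArg (coeff 1) h
    simp [coeff_exp] at h1
  apply mul_right_cancel₀ hexp1
  have h1 : (G * exp ℚ + G) * (exp ℚ - 1) = G * (rescale (2:ℚ) (exp ℚ) - 1) := by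
    rw [← exp_sq]; ring
  have h2 : G * (rescale (2:ℚ) (exp ℚ) - 1) = rescale (2:ℚ) (B * (exp ℚ - 1)) := by
    rw [map_mul, map_sub, map_one]
  rw [h1, h2, bernoulliPowerSeries_mul_exp_sub_one, rescale_two_X]
  rw [mul_assoc, bernoulliPowerSeries_mul_exp_sub_one]

lemma bernoulli_half_core (n : ℕ) :
    ∑ j ∈ range (n+1), (n.choose j : ℚ) * bernoulli j * 2^j = (2 - 2^n) * bernoulli n := by
  have hfact : ∀ m:ℕ, (m ! : ℚ) ≠ 0 := fun m => by exact_mod_cast m.factorial_ne_zero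
  have hco := congrArg (coeff n) half_gf
  rw [map_add, coeff_C_mul, coeff_mul,
    sum_antidiagonal_eq_sum_range_succ
      (fun a b => coeff a (rescale (2:ℚ) (bernoulliPowerSeries ℚ)) * coeff b (exp ℚ))] at hco
  simp only [Nat.succ_eq_add_one] at hco
  have hG : ∀ m, coeff m (rescale (2:ℚ) (bernoulliPowerSeries ℚ)) = 2^m * (bernoulli m / m !) := by
    intro m
    rw [coeff_rescale, bernoulliPowerSeries, coeff_mk]
    simp
  have hBc : coeff n (bernoulliPowerSeries ℚ) = bernoulli n / n ! := by
    rw [bernoulliPowerSeries, coeff_mk]; simp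
  have hsum : ∑ j ∈ range (n+1), (n.choose j:ℚ) * bernoulli j * 2^j
      = (n ! : ℚ) * ∑ k ∈ range (n+1),
          coeff k (rescale (2:ℚ) (bernoulliPowerSeries ℚ)) * coeff (n-k) (exp ℚ) := by
    rw [Finset.mul_sum]
    refine Finset.sum_congr rfl fun j hj => ?_
    rw [Finset.mem_range] at hj
    have hjn : j ≤ n := by omega
    rw [hG j, coeff_exp]
    have hch := Nat.choose_mul_factorial_mul_factorial hjn
    have hc : ((n.choose j : ℕ) : ℚ) * (j ! : ℚ) * ((n-j)! : ℚ) = (n ! : ℚ) := by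
      exact_mod_cast congrArg (fun t : ℕ => (t : ℚ)) hch
    simp only [Algebra.algebraMap_self, RingHom.id_apply]
    field_simp
    linear_combination bernoulli j * hc
  rw [hsum, eq_sub_of_add_eq hco, hG n, hBc]
  field_simp

lemma sum_choose_bernoulli_half (m : ℕ) :
    ∑ j ∈ range (m+1), bernoulli j * (((m+1).choose j : ℕ) : ℚ) * (1/2:ℚ)^(m+1-j)
      = ((1/2:ℚ)^m - 2) * bernoulli (m+1) := by
  have hcore := bernoulli_half_core (m+1)
  rw [Finset.sum_range_succ, Nat.choose_self] at hcore
  -- hcore : ∑_{j∈range(m+1)} C(m+1,j) B_j 2^j + 1 * B_{m+1} * 2^{m+1} = (2 - 2^{m+1}) B_{m+1}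
  have hkey : ∑ j ∈ range (m+1), ((m+1).choose j : ℚ) * bernoulli j * 2^j
      = (2 - 2^(m+1) - 2^(m+1)) * bernoulli (m+1) := by
    rw [eq_sub_of_add_eq hcore]; push_cast; ring
  have hterm : ∀ j ∈ range (m+1),
      bernoulli j * (((m+1).choose j : ℕ) : ℚ) * (1/2:ℚ)^(m+1-j)
        = (((m+1).choose j : ℚ) * bernoulli j * 2^j) * (1/2:ℚ)^(m+1) := by
    intro j hj
    rw [Finset.mem_range] at hj
    have h1 : (1/2:ℚ)^(m+1-j) = 2^j * (1/2:ℚ)^(m+1) := by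
      have : (1/2:ℚ)^(m+1) = (1/2:ℚ)^j * (1/2:ℚ)^(m+1-j) := by
        rw [← pow_add]; congr 1; omega
      have h2 : (2:ℚ)^j * (1/2:ℚ)^j = 1 := by
        rw [← mul_pow]; norm_num
      rw [this, ← mul_assoc, h2, one_mul]
    rw [h1]; ring
  rw [Finset.sum_congr rfl hterm, ← Finset.sum_mul, hkey]
  have h3 : (2:ℚ)^(m+1) * (1/2:ℚ)^(m+1) = 1 := by rw [← mul_pow]; norm_num
  have h6 : (1/2:ℚ)^m = 2 * (1/2:ℚ)^(m+1) := by rw [pow_succ]; ring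
  rw [h6]
  linear_combination (-2 * bernoulli (m+1)) * h3

lemma sum_range_odd_even {M : Type*} [AddCommMonoid M] (f : ℕ → M) (N : ℕ) :
    ∑ k ∈ range (2*N+1), f k = ∑ k ∈ range (N+1), f (2*k) + ∑ k ∈ range N, f (2*k+1) := by
  induction N with
  | zero => simp
  | succ N ih =>
    have h1 : 2*(N+1)+1 = (2*N+1) + 1 + 1 := by ring
    rw [h1, Finset.sum_range_succ, Finset.sum_range_succ, ih,
      Finset.sum_range_succ (fun k => f (2*k)) (N+1), Finset.sum_range_succ (fun k => f (2*k+1)) N]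
    have e1 : 2*N+1 = 2*N+1 := rfl
    have e2 : 2*N+1+1 = 2*(N+1) := by ring
    rw [e2]
    abel

end Half

lemma norm_int_le_inv_of_dvd {z : ℤ} (h : (p:ℤ) ∣ z) : ‖(z : ℚ_[p])‖ ≤ (p:ℝ)⁻¹ := by
  obtain ⟨c, rfl⟩ := h
  push_cast
  rw [norm_mul, Padic.norm_p]
  calc (p:ℝ)⁻¹ * ‖(c : ℚ_[p])‖ ≤ (p:ℝ)⁻¹ * 1 := by
        apply mul_le_mul_of_nonneg_left (Padic.norm_int_le_one c) (by positivity)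
    _ = (p:ℝ)⁻¹ := mul_one _

lemma two_pow_fermat (hp2 : 2 < p) : (p:ℤ) ∣ 2^(p-1) - 1 := by
  have h1 : ((2:ℕ) : ZMod p) ≠ 0 := by
    rw [Ne, ZMod.natCast_eq_zero_iff]
    intro hd
    have := Nat.le_of_dvd (by omega) hd
    omega
  have h2 : ((2:ℕ) : ZMod p) ^ (p - 1) = 1 := ZMod.pow_card_sub_one_eq_one h1
  have h0 : (((2:ℤ)^(p-1) - 1 : ℤ) : ZMod p) = 0 := by push_cast [h2]; push_cast at h2; rw [h2]; ring
  exact_mod_cast (ZMod.intCast_zmod_eq_zero_iff_dvd _ p).mp h0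

lemma pow_diff_norm {a b : ℚ_[p]} {c : ℝ} (ha : ‖a‖ ≤ 1) (hb : ‖b‖ ≤ 1) (hc : 0 ≤ c)
    (h : ‖a - b‖ ≤ c) : ∀ e : ℕ, ‖a^e - b^e‖ ≤ c := by
  intro e
  induction e with
  | zero => simpa using hc
  | succ e ih =>
    have hre : a^(e+1) - b^(e+1) = a^e * (a - b) + b * (a^e - b^e) := by ring
    rw [hre]
    apply le_trans (Padic.nonarchimedean _ _)
    apply max_le
    · rw [norm_mul]
      calc ‖a^e‖ * ‖a-b‖ ≤ 1 * c := by
            apply mul_le_mul _ h (norm_nonneg _) zero_le_one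
            rw [norm_pow]; exact pow_le_one₀ (norm_nonneg _) ha
        _ = c := one_mul c
    · rw [norm_mul]
      calc ‖b‖ * ‖a^e - b^e‖ ≤ 1 * c := by
            apply mul_le_mul hb ih (norm_nonneg _) zero_le_one
        _ = c := one_mul c

lemma main_chain (hp5 : 5 < p) {i : ℕ} (hi2 : 2 ≤ i) (hi3 : i ≤ p - 3) :
    ‖(∑ k ∈ range ((p-1)/2), 1/(((2*k+1 : ℕ)) : ℚ_[p])^(i-1))
      - ((2:ℚ_[p])^(p+1-i) - 1) * ((bernoulli (p+1-i) : ℚ):ℚ_[p]) / (((p+1-i : ℕ)) : ℚ_[p])‖ < 1 := by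
  have hpodd : p % 2 = 1 := Nat.odd_iff.mp (hp.out.odd_of_ne_two (by omega))
  set m := p - i with hm
  have hip : i ≤ p := by omega
  have hm1 : m + 1 = p + 1 - i := by omega
  have hmle : m ≤ p - 2 := by omega
  have hm3 : 3 ≤ m := by omega
  set N := (p-1)/2 with hNdef
  have hN : 2*N+1 = p := by omega
  have hinv : (0:ℝ) < (p:ℝ)⁻¹ := by
    have : (0:ℝ) < p := by exact_mod_cast hp.out.pos
    positivity
  have hinv1 : (p:ℝ)⁻¹ < 1 := by
    apply inv_lt_one_of_one_lt₀
    exact_mod_cast hp.out.one_lt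
  -- Step A : T ≡ Un
  have hTU : ‖(∑ k ∈ range N, 1/(((2*k+1 : ℕ)) : ℚ_[p])^(i-1))
      - ((∑ k ∈ range N, (2*k+1)^m : ℕ) : ℚ_[p])‖ < 1 := by
    have hc : ((∑ k ∈ range N, (2*k+1)^m : ℕ) : ℚ_[p]) = ∑ k ∈ range N, (((2*k+1:ℕ)) : ℚ_[p])^m := by
      push_cast; rfl
    rw [hc, ← Finset.sum_sub_distrib]
    apply norm_sum_lt_one
    intro k hk
    rw [Finset.mem_range] at hk
    have hlt : 2*k+1 < p := by omega
    have hnd : ¬ p ∣ (2*k+1) := fun hd => by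
      have := Nat.le_of_dvd (by omega) hd; omega
    exact term_reduction hnd hi2 hip
  -- Step B : nat splitting
  have hsplit : (∑ k ∈ range p, k^m) = (∑ k ∈ range (N+1), (2*k)^m) + ∑ k ∈ range N, (2*k+1)^m := by
    rw [← hN]
    exact sum_range_odd_even (fun k => k^m) N
  have hE : (∑ k ∈ range (N+1), (2*k)^m) = 2^m * ∑ k ∈ range (N+1), k^m := by
    rw [Finset.mul_sum]
    exact Finset.sum_congr rfl fun k _ => by rw [mul_pow]
  -- Step C
  have hS : ‖((∑ k ∈ range p, k^m : ℕ) : ℚ_[p])‖ ≤ (p:ℝ)⁻¹ :=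
    norm_le_inv_of_dvd (snat_dvd (by omega))
  -- Step D : S' ≡ V
  have hmnd : ¬ p ∣ (m+1) := fun hd => by
    have := Nat.le_of_dvd (by omega) hd; omega
  have hhalf_norm : ‖((1:ℚ_[p])/2)‖ ≤ 1 := by
    rw [norm_div, norm_one]
    rw [show ((2:ℚ_[p])) = ((2:ℕ) : ℚ_[p]) by push_cast; ring]
    rw [norm_eq_one_of_not_dvd (fun hd => by have := Nat.le_of_dvd (by omega) hd; omega)]
    norm_num
  have hdiff : ‖(((N+1:ℕ)) : ℚ_[p]) - 1/2‖ ≤ (p:ℝ)⁻¹ := by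
    have h2ne : ((2:ℕ) : ℚ_[p]) ≠ 0 := Nat.cast_ne_zero.mpr (by omega)
    have hid : (((N+1:ℕ)) : ℚ_[p]) - 1/2 = (((2*N+1:ℕ)) : ℚ_[p]) / ((2:ℕ) : ℚ_[p]) := by
      field_simp
      push_cast
      ring
    rw [hid, hN, norm_div]
    have h2n : ‖((2:ℕ) : ℚ_[p])‖ = 1 :=
      norm_eq_one_of_not_dvd (fun hd => by have := Nat.le_of_dvd (by omega) hd; omega)
    rw [h2n, div_one, show ((p:ℕ) : ℚ_[p]) = (p : ℚ_[p]) by push_cast; ring, Padic.norm_p]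
  have hSV : ‖((∑ k ∈ range (N+1), k^m : ℕ) : ℚ_[p])
      - ∑ j ∈ range (m+1), ((bernoulli j : ℚ):ℚ_[p]) * (((m+1).choose j : ℕ) : ℚ_[p])
        * ((1:ℚ_[p])/2)^(m+1-j) / ((m+1 : ℕ) : ℚ_[p])‖ ≤ (p:ℝ)⁻¹ := by
    have hc : ((∑ k ∈ range (N+1), k^m : ℕ) : ℚ_[p]) = ∑ k ∈ range (N+1), ((k:ℕ) : ℚ_[p])^m := by
      push_cast; rfl
    rw [hc, faulhaber_padic (N+1) m, ← Finset.sum_sub_distrib]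
    apply padic_norm_sum_le_of_le _ _ (le_of_lt hinv)
    intro j hj
    rw [Finset.mem_range] at hj
    have hre : ((bernoulli j : ℚ):ℚ_[p]) * (((m+1).choose j : ℕ) : ℚ_[p])
          * (((N+1:ℕ)) : ℚ_[p])^(m+1-j) / ((m+1 : ℕ) : ℚ_[p])
        - ((bernoulli j : ℚ):ℚ_[p]) * (((m+1).choose j : ℕ) : ℚ_[p])
          * ((1:ℚ_[p])/2)^(m+1-j) / ((m+1 : ℕ) : ℚ_[p])
        = ((bernoulli j : ℚ):ℚ_[p]) * (((m+1).choose j : ℕ) : ℚ_[p])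
          * ((((N+1:ℕ)) : ℚ_[p])^(m+1-j) - ((1:ℚ_[p])/2)^(m+1-j)) / ((m+1 : ℕ) : ℚ_[p]) := by
      ring
    rw [hre, norm_div, norm_mul, norm_mul, norm_eq_one_of_not_dvd hmnd, div_one]
    have h1 : ‖((bernoulli j : ℚ):ℚ_[p])‖ ≤ 1 := norm_bernoulli_le_one hp5 j (by omega)
    have h2 : ‖(((m+1).choose j : ℕ) : ℚ_[p])‖ ≤ 1 := norm_natCast_le_one _
    have h3 : ‖(((N+1:ℕ)) : ℚ_[p])^(m+1-j) - ((1:ℚ_[p])/2)^(m+1-j)‖ ≤ (p:ℝ)⁻¹ :=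
      pow_diff_norm (norm_natCast_le_one _) hhalf_norm (le_of_lt hinv) hdiff _
    calc ‖((bernoulli j : ℚ):ℚ_[p])‖ * ‖(((m+1).choose j : ℕ) : ℚ_[p])‖
          * ‖(((N+1:ℕ)) : ℚ_[p])^(m+1-j) - ((1:ℚ_[p])/2)^(m+1-j)‖
        ≤ 1 * 1 * (p:ℝ)⁻¹ := by
          apply mul_le_mul (mul_le_mul h1 h2 (norm_nonneg _) zero_le_one) h3 (norm_nonneg _)
          norm_num
      _ = (p:ℝ)⁻¹ := by ring
  -- Step E : closed form of V
  have hVeq : (∑ j ∈ range (m+1), ((bernoulli j : ℚ):ℚ_[p]) * (((m+1).choose j : ℕ) : ℚ_[p])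
        * ((1:ℚ_[p])/2)^(m+1-j) / ((m+1 : ℕ) : ℚ_[p]))
      = (((1:ℚ_[p])/2)^m - 2) * ((bernoulli (m+1) : ℚ):ℚ_[p]) / ((m+1 : ℕ) : ℚ_[p]) := by
    have hq := sum_choose_bernoulli_half m
    have hqc := congrArg (fun q : ℚ => (q : ℚ_[p])) hq
    push_cast at hqc
    rw [← Finset.sum_div, ← hqc]
  -- Step F : combine
  set V := (((1:ℚ_[p])/2)^m - 2) * ((bernoulli (m+1) : ℚ):ℚ_[p]) / ((m+1 : ℕ) : ℚ_[p]) with hV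
  set W := ((2:ℚ_[p])^(m+1) - 1) * ((bernoulli (m+1) : ℚ):ℚ_[p]) / ((m+1 : ℕ) : ℚ_[p]) with hW
  have h2half : (2:ℚ_[p])^m * ((1:ℚ_[p])/2)^m = 1 := by
    rw [← mul_pow]; norm_num
  have hWV : W = -((2:ℚ_[p])^m * V) := by
    rw [hW, hV]
    linear_combination (((bernoulli (m+1) : ℚ):ℚ_[p]) / ((m+1 : ℕ) : ℚ_[p])) * h2half
  have hUn : ((∑ k ∈ range N, (2*k+1)^m : ℕ) : ℚ_[p])
      = ((∑ k ∈ range p, k^m : ℕ) : ℚ_[p]) - (2:ℚ_[p])^m * ((∑ k ∈ range (N+1), k^m : ℕ) : ℚ_[p]) := by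
    rw [hsplit, hE]
    push_cast
    ring
  have hUW : ‖((∑ k ∈ range N, (2*k+1)^m : ℕ) : ℚ_[p]) - W‖ ≤ (p:ℝ)⁻¹ := by
    have hre : ((∑ k ∈ range N, (2*k+1)^m : ℕ) : ℚ_[p]) - W
        = ((∑ k ∈ range p, k^m : ℕ) : ℚ_[p])
          - (2:ℚ_[p])^m * (((∑ k ∈ range (N+1), k^m : ℕ) : ℚ_[p])
            - ∑ j ∈ range (m+1), ((bernoulli j : ℚ):ℚ_[p]) * (((m+1).choose j : ℕ) : ℚ_[p])
              * ((1:ℚ_[p])/2)^(m+1-j) / ((m+1 : ℕ) : ℚ_[p])) := by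
      rw [hUn, hWV, hVeq]
      ring
    rw [hre, sub_eq_add_neg]
    apply le_trans (Padic.nonarchimedean _ _)
    apply max_le hS
    rw [norm_neg, norm_mul]
    calc ‖(2:ℚ_[p])^m‖ * ‖_‖ ≤ 1 * (p:ℝ)⁻¹ := by
          apply mul_le_mul _ hSV (norm_nonneg _) zero_le_one
          rw [norm_pow]
          apply pow_le_one₀ (norm_nonneg _)
          rw [show ((2:ℚ_[p])) = ((2:ℕ) : ℚ_[p]) by push_cast; ring]
          exact norm_natCast_le_one 2
      _ = (p:ℝ)⁻¹ := one_mul _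
  -- final
  have := sm_trans hTU (lt_of_le_of_lt hUW hinv1)
  rw [hW, hm1] at this
  exact this
/-- residues of the sums of reciprocals of `(i-1)`-th powers of the
odd integers below `p`. Here `q_2 = (2^(p-1) - 1)/p` is the Fermat quotient in base 2. -/
theorem odd_reciprocal_powers_sum (p : ℕ) (hp : p.Prime) (hp5 : 5 < p)
    (i : ℕ) (hi2 : 2 ≤ i) (hi3 : i ≤ p - 3) :
    (i = 2 →
      ratCongr p 1
        (∑ k ∈ Finset.range ((p - 1) / 2), (1 : ℚ) / ((2 * k + 1 : ℕ) : ℚ) ^ (i - 1))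
        ((((2 : ℤ) ^ (p - 1) - 1) / (p : ℤ) : ℤ) : ℚ)) ∧
    (Even i → 4 ≤ i →
      ratCongr p 1
        (∑ k ∈ Finset.range ((p - 1) / 2), (1 : ℚ) / ((2 * k + 1 : ℕ) : ℚ) ^ (i - 1))
        ((1 / 2 ^ (i - 2) - 1) * bernoulli (p + 1 - i) / ((p : ℚ) + 1 - (i : ℚ)))) ∧
    (Odd i → 3 ≤ i → i ≤ p - 4 →
      ratCongr p 1
        (∑ k ∈ Finset.range ((p - 1) / 2), (1 : ℚ) / ((2 * k + 1 : ℕ) : ℚ) ^ (i - 1))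
        0) := by
  haveI instF : Fact p.Prime := ⟨hp⟩
  have hpodd : p % 2 = 1 := Nat.odd_iff.mp (hp.odd_of_ne_two (by omega))
  have hip : i ≤ p := by omega
  have hinv : (0:ℝ) < (p:ℝ)⁻¹ := by
    have : (0:ℝ) < p := by exact_mod_cast hp.pos
    positivity
  have hinv1 : (p:ℝ)⁻¹ < 1 := by
    apply inv_lt_one_of_one_lt₀
    exact_mod_cast hp.one_lt
  have hT : ((∑ k ∈ Finset.range ((p - 1) / 2), (1 : ℚ) / ((2 * k + 1 : ℕ) : ℚ) ^ (i - 1) : ℚ) : ℚ_[p])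
      = ∑ k ∈ Finset.range ((p-1)/2), 1/(((2*k+1 : ℕ)) : ℚ_[p])^(i-1) := by
    push_cast
    rfl
  have hMC := main_chain (p := p) hp5 hi2 hi3
  have hmnd : ¬ p ∣ (p+1-i) := fun hd => by
    have := Nat.le_of_dvd (by omega) hd; omega
  have hmK : ‖(((p+1-i : ℕ)) : ℚ_[p])‖ = 1 := norm_eq_one_of_not_dvd hmnd
  have h2norm : ‖(2 : ℚ_[p])‖ = 1 := by
    rw [show ((2:ℚ_[p])) = ((2:ℕ) : ℚ_[p]) by push_cast; ring]
    exact norm_eq_one_of_not_dvd (fun hd => by have := Nat.le_of_dvd (by omega) hd; omega)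
  refine ⟨?_, ?_, ?_⟩
  · -- i = 2
    rintro rfl
    rw [ratCongr_iff, hT]
    obtain ⟨c, hc⟩ := two_pow_fermat (p := p) (by omega)
    have hc' : (2:ℤ)^(p-1) - 1 = p * c := by linarith [hc]
    have hQ : (((2:ℤ)^(p-1) - 1) / (p:ℤ)) = c := by
      rw [hc']
      exact Int.mul_ediv_cancel_left _ (by exact_mod_cast hp.ne_zero)
    rw [hQ]
    have hcast : (((c : ℤ) : ℚ) : ℚ_[p]) = (c : ℚ_[p]) := by push_cast; ring
    rw [hcast]
    have h2K : ((2:ℚ_[p])^(p-1) - 1) = (p:ℚ_[p]) * (c:ℚ_[p]) := by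
      have := congrArg (fun z : ℤ => (z : ℚ_[p])) hc'
      push_cast at this
      exact this
    apply sm_trans hMC
    have he1 : p + 1 - 2 = p - 1 := by omega
    rw [he1]
    have hpm1 : (((p-1 : ℕ)) : ℚ_[p]) = (p : ℚ_[p]) - 1 := by
      push_cast [Nat.cast_sub (by omega : 1 ≤ p)]
      ring
    have hre : ((2:ℚ_[p])^(p-1) - 1) * ((bernoulli (p-1) : ℚ):ℚ_[p]) / (((p-1 : ℕ)) : ℚ_[p])
        - (c : ℚ_[p])
        = (c : ℚ_[p]) * (((p:ℚ_[p]) * ((bernoulli (p-1) : ℚ):ℚ_[p]) + 1) - (p:ℚ_[p]))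
          / (((p-1 : ℕ)) : ℚ_[p]) := by
      rw [h2K, hpm1]
      have hne : (p:ℚ_[p]) - 1 ≠ 0 := by
        intro h0
        have : (p:ℚ_[p]) = 1 := by linear_combination h0
        have h1 : ‖(p:ℚ_[p])‖ = 1 := by rw [this, norm_one]
        rw [Padic.norm_p] at h1
        rw [h1] at hinv1
        exact lt_irrefl _ hinv1
      field_simp
      ring
    rw [hre, norm_div, norm_mul]
    have hdenom : ‖(((p-1:ℕ)) : ℚ_[p])‖ = 1 :=
      norm_eq_one_of_not_dvd (fun hd => by have := Nat.le_of_dvd (by omega) hd; omega)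
    rw [hdenom, div_one]
    have hD : ‖((p:ℚ_[p]) * ((bernoulli (p-1) : ℚ):ℚ_[p]) + 1) - (p:ℚ_[p])‖ ≤ (p:ℝ)⁻¹ := by
      rw [sub_eq_add_neg]
      apply le_trans (Padic.nonarchimedean _ _)
      apply max_le (vsc_top hp5)
      rw [norm_neg, Padic.norm_p]
    calc ‖(c:ℚ_[p])‖ * ‖_‖ ≤ 1 * (p:ℝ)⁻¹ := by
          apply mul_le_mul (Padic.norm_int_le_one c) hD (norm_nonneg _) zero_le_one
      _ < 1 := by rwa [one_mul]
  · -- even i, 4 ≤ i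
    intro hev hi4
    have hBnorm : ‖((bernoulli (p+1-i) : ℚ) : ℚ_[p])‖ ≤ 1 := by
      apply norm_bernoulli_le_one hp5
      omega
    rw [ratCongr_iff, hT]
    apply sm_trans hMC
    have hRcast : (((1 / 2 ^ (i - 2) - 1) * bernoulli (p + 1 - i) / ((p : ℚ) + 1 - (i : ℚ)) : ℚ) : ℚ_[p])
        = ((1:ℚ_[p]) / 2 ^ (i - 2) - 1) * ((bernoulli (p + 1 - i) : ℚ) : ℚ_[p])
          / (((p+1-i : ℕ)) : ℚ_[p]) := by
      push_cast [Nat.cast_sub (by omega : i ≤ p + 1)]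
      ring
    rw [hRcast]
    have h2ne : (2:ℚ_[p])^(i-2) ≠ 0 := pow_ne_zero _ two_ne_zero
    have hmne : (((p+1-i : ℕ)) : ℚ_[p]) ≠ 0 := by
      intro h0
      rw [h0, norm_zero] at hmK
      norm_num at hmK
    have hpow : (2:ℚ_[p])^(p+1-i) * (2:ℚ_[p])^(i-2) = (2:ℚ_[p])^(p-1) := by
      rw [← pow_add]; congr 1; omega
    have hre : ((2:ℚ_[p])^(p+1-i) - 1) * ((bernoulli (p+1-i) : ℚ):ℚ_[p]) / (((p+1-i : ℕ)) : ℚ_[p])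
        - ((1:ℚ_[p]) / 2 ^ (i - 2) - 1) * ((bernoulli (p + 1 - i) : ℚ) : ℚ_[p])
          / (((p+1-i : ℕ)) : ℚ_[p])
        = ((2:ℚ_[p])^(p-1) - 1) * ((bernoulli (p+1-i) : ℚ):ℚ_[p])
          / ((2:ℚ_[p])^(i-2) * (((p+1-i : ℕ)) : ℚ_[p])) := by
      field_simp
      linear_combination ((bernoulli (p+1-i) : ℚ):ℚ_[p]) * hpow
    rw [hre, norm_div, norm_mul, norm_mul, norm_pow, h2norm, one_pow, hmK, mul_one,
      div_one]
    have hferm : ‖(2:ℚ_[p])^(p-1) - 1‖ ≤ (p:ℝ)⁻¹ := by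
      have := norm_int_le_inv_of_dvd (p := p) (two_pow_fermat (by omega))
      have hcast2 : (((2:ℤ)^(p-1) - 1 : ℤ) : ℚ_[p]) = (2:ℚ_[p])^(p-1) - 1 := by push_cast; ring
      rwa [hcast2] at this
    calc ‖(2:ℚ_[p])^(p-1) - 1‖ * ‖((bernoulli (p+1-i) : ℚ):ℚ_[p])‖ ≤ (p:ℝ)⁻¹ * 1 := by
          apply mul_le_mul hferm hBnorm (norm_nonneg _) (le_of_lt hinv)
      _ < 1 := by rwa [mul_one]
  · -- odd i
    intro hodd hi3' hi4
    rw [ratCongr_iff, hT]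
    have hoddm : Odd (p+1-i) := by
      obtain ⟨t, ht⟩ := Nat.odd_iff.mpr hpodd
      obtain ⟨s, hs⟩ := hodd
      exact ⟨t - s, by omega⟩
    have hB0 : bernoulli (p+1-i) = 0 := bernoulli_odd_zero hoddm (by omega)
    rw [hB0] at hMC
    simp only [Rat.cast_zero, zero_mul, mul_zero, zero_div, sub_zero] at hMC ⊢
    convert hMC using 2
end
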